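/- arXiv:1411.7118 — 7 statements merged into one kernel-verified Lean document; each statement's English description precedes it below -/
import Mathlib

section
/- The Frobenius set F = {g ∈ J : g + C_X is a maximal saturated cone} is non-empty and finite. -/
/-!
Fix `α` with `⟪X j, α⟫ > 0` for all `j`. Then `C_X` is pointed, so a translate `g + C_X` determines
`g`, and the height `⟪g, α⟫` has finite sublevel sets on `J`.

A saturated cone exists: by integrality the parallelepiped `{∑ tⱼ Xⱼ : 0 ≤ tⱼ ≤ 1}` contains only
finitely many lattice points, so for `n` large all of them lie in `J - n (X₁ + ⋯ + X_m)`; every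
lattice point of `n (X₁ + ⋯ + X_m) + C_X` is that translate of such a point plus a point of `J`.
A saturated `g` of least height is then maximal.

Distinct maximal saturated cones are not nested, so the coefficient vectors in `ℕ^m` of their tips
form an antichain, which is finite by Dickson's lemma.
-/

open scoped BigOperators RealInnerProductSpace
open Filter Topology

noncomputable section

/-- `Euc s` is the Euclidean space `ℝ^s`. -/
abbrev Euc (s : ℕ) := EuclideanSpace ℝ (Fin s)

/-- The additive semigroup `X₁ℕ + ⋯ + X_mℕ` generated by the vectors `X j`. -/
def sgOf {s : ℕ} {ι : Type*} [Fintype ι] (X : ι → Euc s) : Set (Euc s) :=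
  {z | ∃ u : ι → ℕ, ∑ j, (u j : ℝ) • X j = z}

/-- The lattice `X₁ℤ + ⋯ + X_mℤ` generated by the vectors `X j`. -/
def latOf {s : ℕ} {ι : Type*} [Fintype ι] (X : ι → Euc s) : Set (Euc s) :=
  {z | ∃ u : ι → ℤ, ∑ j, (u j : ℝ) • X j = z}

/-- The convex cone `X₁ℝ⁺ + ⋯ + X_mℝ⁺` generated by the vectors `X j`. -/
def coneOf {s : ℕ} {ι : Type*} [Fintype ι] (X : ι → Euc s) : Set (Euc s) :=
  {x | ∃ c : ι → ℝ, (∀ j, 0 ≤ c j) ∧ ∑ j, c j • X j = x}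

/-- The multiplicity of `z`: the number of finite words `i₁…i_n` with
`X_{i₁} + ⋯ + X_{i_n} = z`. -/
def mult {s : ℕ} {ι : Type*} [Fintype ι] (X : ι → Euc s) (z : Euc s) : ℕ :=
  Set.ncard {w : List ι | (w.map X).sum = z}

/-- The multiplicity extended to the cone: the minimum of `mult X z` over points
`z` of the semigroup nearest to `x`. -/
def multC {s : ℕ} {ι : Type*} [Fintype ι] (X : ι → Euc s) (x : Euc s) : ℕ :=
  sInf {n | ∃ z ∈ sgOf X, dist x z = Metric.infDist x (sgOf X) ∧ mult X z = n}

/-- All the vectors `X j` have integer coordinates. -/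
def IntegralVecs {s : ℕ} {ι : Type*} (X : ι → Euc s) : Prop :=
  ∀ j i, ∃ n : ℤ, X j i = (n : ℝ)

/-- The entropy `h(p) = -∑ p_j log p_j` of a probability vector. -/
def entropy {m : ℕ} (p : Fin m → ℝ) : ℝ := -∑ j, p j * Real.log (p j)

/-- The `p`-th iteration of `X`: all sums `X_{ω₁} + ⋯ + X_{ω_p}` over words `ω`. -/
def iter {s m : ℕ} (X : Fin m → Euc s) (p : ℕ) : (Fin p → Fin m) → Euc s :=
  fun ω => ∑ i, X (ω i)

variable {s : ℕ} {ι : Type*} [Fintype ι]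

section Generators

variable (X : ι → Euc s)

theorem sgOf_eq_span : sgOf X = Submodule.span ℕ (Set.range X) := by
  ext z
  simp [sgOf, Submodule.mem_span_range_iff_exists_fun, Nat.cast_smul_eq_nsmul]

theorem latOf_eq_span : latOf X = Submodule.span ℤ (Set.range X) := by
  ext z
  simp [latOf, Submodule.mem_span_range_iff_exists_fun, Int.cast_smul_eq_zsmul]

theorem sgOf_subset_latOf : sgOf X ⊆ latOf X := by
  rintro z ⟨u, rfl⟩
  exact ⟨fun j => u j, by simp⟩

theorem zero_mem_coneOf : (0 : Euc s) ∈ coneOf X :=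
  ⟨0, fun _ => le_rfl, by simp⟩

theorem add_mem_coneOf {x y : Euc s} (hx : x ∈ coneOf X) (hy : y ∈ coneOf X) :
    x + y ∈ coneOf X := by
  obtain ⟨c, hc, rfl⟩ := hx
  obtain ⟨d, hd, rfl⟩ := hy
  exact ⟨c + d, fun j => add_nonneg (hc j) (hd j), by simp [add_smul, Finset.sum_add_distrib]⟩

theorem mem_add_image_coneOf_self (g : Euc s) : g ∈ (g + ·) '' coneOf X :=
  ⟨0, zero_mem_coneOf X, add_zero g⟩

theorem add_image_coneOf_subset {g g' : Euc s} (h : g ∈ (g' + ·) '' coneOf X) :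
    (g + ·) '' coneOf X ⊆ (g' + ·) '' coneOf X := by
  obtain ⟨c, hc, rfl⟩ := h
  rintro _ ⟨d, hd, rfl⟩
  exact ⟨c + d, add_mem_coneOf X hc hd, (add_assoc _ _ _).symm⟩

end Generators

section Pointed

variable {X : ι → Euc s} {α : Euc s}

theorem inner_sum_smul (c : ι → ℝ) : ⟪∑ j, c j • X j, α⟫ = ∑ j, c j * ⟪X j, α⟫ := by
  simp [sum_inner, real_inner_smul_left]

theorem eq_zero_of_inner_sum_smul_eq_zero (hα : ∀ j, 0 < ⟪X j, α⟫) {c : ι → ℝ}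
    (hc : ∀ j, 0 ≤ c j) (h : ⟪∑ j, c j • X j, α⟫ = 0) : c = 0 := by
  rw [inner_sum_smul, Finset.sum_eq_zero_iff_of_nonneg fun j _ => mul_nonneg (hc j) (hα j).le] at h
  funext j
  exact (mul_eq_zero.1 (h j (Finset.mem_univ j))).resolve_right (hα j).ne'

theorem inner_nonneg_of_mem_coneOf (hα : ∀ j, 0 < ⟪X j, α⟫) {x : Euc s} (hx : x ∈ coneOf X) :
    0 ≤ ⟪x, α⟫ := by
  obtain ⟨c, hc, rfl⟩ := hx
  rw [inner_sum_smul]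
  exact Finset.sum_nonneg fun j _ => mul_nonneg (hc j) (hα j).le

theorem eq_zero_of_mem_coneOf_of_inner_eq_zero (hα : ∀ j, 0 < ⟪X j, α⟫) {x : Euc s}
    (hx : x ∈ coneOf X) (h : ⟪x, α⟫ = 0) : x = 0 := by
  obtain ⟨c, hc, rfl⟩ := hx
  simp [eq_zero_of_inner_sum_smul_eq_zero hα hc h]

theorem eq_of_add_image_coneOf_eq (hα : ∀ j, 0 < ⟪X j, α⟫) {g g' : Euc s}
    (h : (g + ·) '' coneOf X = (g' + ·) '' coneOf X) : g = g' := by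
  obtain ⟨c, hc, hcg : g' + c = g⟩ : g ∈ (g' + ·) '' coneOf X := h ▸ mem_add_image_coneOf_self X g
  obtain ⟨d, hd, hdg : g + d = g'⟩ : g' ∈ (g + ·) '' coneOf X := h ▸ mem_add_image_coneOf_self X g'
  have hcd : c + d = 0 :=
    calc c + d = g' + c + d - g' := by abel
      _ = 0 := by rw [hcg, hdg, sub_self]
  have hc₀ := inner_nonneg_of_mem_coneOf hα hc
  have hd₀ := inner_nonneg_of_mem_coneOf hα hd
  have hcd₀ : ⟪c, α⟫ + ⟪d, α⟫ = 0 := by rw [← inner_add_left, hcd, inner_zero_left]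
  rw [← hcg, eq_zero_of_mem_coneOf_of_inner_eq_zero hα hc (by linarith), add_zero]

theorem finite_setOf_inner_sum_le (hα : ∀ j, 0 < ⟪X j, α⟫) (B : ℝ) :
    {u : ι → ℕ | ⟪∑ j, (u j : ℝ) • X j, α⟫ ≤ B}.Finite := by
  refine (Set.Finite.pi' fun j => Set.finite_Iic ⌊B / ⟪X j, α⟫⌋₊).subset fun u hu j => ?_
  rw [Set.mem_ofPred_eq, inner_sum_smul] at hu
  refine Nat.le_floor ((le_div_iff₀ (hα j)).2 (le_trans ?_ hu))
  exact Finset.single_le_sum (f := fun k => (u k : ℝ) * ⟪X k, α⟫)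
    (fun k _ => mul_nonneg (Nat.cast_nonneg _) (hα k).le) (Finset.mem_univ j)

theorem finite_sgOf_inter_inner_le (hα : ∀ j, 0 < ⟪X j, α⟫) (B : ℝ) :
    {g ∈ sgOf X | ⟪g, α⟫ ≤ B}.Finite := by
  refine ((finite_setOf_inner_sum_le hα B).image fun u => ∑ j, (u j : ℝ) • X j).subset ?_
  rintro _ ⟨⟨u, rfl⟩, hu⟩
  exact ⟨u, hu, rfl⟩

end Pointed

section Saturation

variable {X : ι → Euc s}

variable (X) in
def IsSaturated (g : Euc s) : Prop :=
  ((g + ·) '' coneOf X) ∩ sgOf X = ((g + ·) '' coneOf X) ∩ latOf X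

theorem isSaturated_iff {g : Euc s} :
    IsSaturated X g ↔ ∀ z ∈ latOf X, z ∈ (g + ·) '' coneOf X → z ∈ sgOf X := by
  refine ⟨fun h z hz hzg => (h ▸ ⟨hzg, hz⟩ : z ∈ ((g + ·) '' coneOf X) ∩ sgOf X).2,
    fun h => ?_⟩
  exact (Set.inter_subset_inter_right _ (sgOf_subset_latOf X)).antisymm
    fun z hz => ⟨hz.1, h z hz.2 hz.1⟩

theorem eventually_add_sum_smul_mem_sgOf {z : Euc s} (hz : z ∈ latOf X) :
    ∀ᶠ n : ℕ in atTop, z + ∑ j, (n : ℝ) • X j ∈ sgOf X := by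
  obtain ⟨a, rfl⟩ := hz
  filter_upwards [eventually_all.2 fun j => eventually_ge_atTop (-a j).toNat] with n hn
  refine ⟨fun j => (a j + n).toNat, ?_⟩
  rw [← Finset.sum_add_distrib]
  refine Finset.sum_congr rfl fun j _ => ?_
  have : 0 ≤ a j + n := by have := hn j; omega
  rw [← add_smul]
  exact_mod_cast congrArg (fun x : ℤ => (x : ℝ) • X j) (Int.toNat_of_nonneg this)

theorem exists_sgOf_add_mem_parallelepiped {c : Euc s} (hc : c ∈ coneOf X) :
    ∃ k ∈ sgOf X, ∃ w ∈ parallelepiped X, k + w = c := by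
  obtain ⟨t, ht, rfl⟩ := hc
  refine ⟨∑ j, (⌊t j⌋₊ : ℝ) • X j, ⟨_, rfl⟩, ∑ j, (t j - ⌊t j⌋₊) • X j,
    ⟨_, ⟨fun j => sub_nonneg.2 (Nat.floor_le (ht j)), fun j => ?_⟩, rfl⟩, ?_⟩
  · show t j - ⌊t j⌋₊ ≤ 1
    linarith [Nat.lt_floor_add_one (t j)]
  · simp only [← Finset.sum_add_distrib, ← add_smul, add_sub_cancel]

theorem latOf_subset_span_basisFun (hint : IntegralVecs X) :
    latOf X ⊆ Submodule.span ℤ (Set.range (EuclideanSpace.basisFun (Fin s) ℝ).toBasis) := by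
  rw [latOf_eq_span, SetLike.coe_subset_coe, Submodule.span_le]
  rintro _ ⟨j, rfl⟩
  rw [SetLike.mem_coe, Module.Basis.mem_span_iff_repr_mem]
  intro i
  simpa [eq_comm] using hint j i

theorem finite_parallelepiped_inter_latOf (hint : IntegralVecs X) :
    (parallelepiped X ∩ latOf X).Finite := by
  refine (ZSpan.setFinite_inter _ ?_).subset
    (Set.inter_subset_inter_right _ (latOf_subset_span_basisFun hint))
  exact (isCompact_Icc.image (by fun_prop) : IsCompact (parallelepiped X)).isBounded

theorem exists_isSaturated (hint : IntegralVecs X) : ∃ g ∈ sgOf X, IsSaturated X g := by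
  obtain ⟨n, hn⟩ := ((finite_parallelepiped_inter_latOf hint).eventually_all.2
    fun w hw => eventually_add_sum_smul_mem_sgOf hw.2).exists
  set g := ∑ j, (n : ℝ) • X j
  have hg : g ∈ sgOf X := ⟨fun _ => n, rfl⟩
  refine ⟨g, hg, isSaturated_iff.2 ?_⟩
  rintro _ hz ⟨_, hc, rfl⟩
  obtain ⟨k, hk, w, hw, rfl⟩ := exists_sgOf_add_mem_parallelepiped hc
  have hwL : w ∈ latOf X := by
    have hgL := sgOf_subset_latOf X hg
    have hkL := sgOf_subset_latOf X hk
    rw [latOf_eq_span] at hz hgL hkL ⊢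
    simpa using sub_mem (sub_mem hz hgL) hkL
  have hwg := hn w ⟨hw, hwL⟩
  rw [sgOf_eq_span] at hk hwg ⊢
  show g + (k + w) ∈ (Submodule.span ℕ (Set.range X) : Set (Euc s))
  rw [show g + (k + w) = w + g + k by abel]
  exact add_mem hwg hk

end Saturation

section FrobeniusSet

variable {X : ι → Euc s} {α : Euc s}

variable (X) in
def frobeniusSet : Set (Euc s) :=
  {g | g ∈ sgOf X ∧ IsSaturated X g ∧
    ∀ g' ∈ sgOf X, IsSaturated X g' →
      (g + ·) '' coneOf X ⊆ (g' + ·) '' coneOf X → (g + ·) '' coneOf X = (g' + ·) '' coneOf X}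

theorem frobeniusSet_nonempty (hint : IntegralVecs X) (hα : ∀ j, 0 < ⟪X j, α⟫) :
    (frobeniusSet X).Nonempty := by
  obtain ⟨g₀, hg₀, hsat₀⟩ := exists_isSaturated hint
  set S := {g ∈ sgOf X | ⟪g, α⟫ ≤ ⟪g₀, α⟫} ∩ {g | IsSaturated X g}
  obtain ⟨g, ⟨⟨hg, hgα⟩, hsat⟩, hmin⟩ := Set.exists_min_image S (⟪·, α⟫)
    ((finite_sgOf_inter_inner_le hα _).inter_of_left _) ⟨g₀, ⟨hg₀, le_rfl⟩, hsat₀⟩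
  refine ⟨g, hg, hsat, fun g' hg' hsat' hsub => ?_⟩
  obtain ⟨c, hc, hcg : g' + c = g⟩ := hsub (mem_add_image_coneOf_self X g)
  have hc₀ := inner_nonneg_of_mem_coneOf hα hc
  have hsplit : ⟪g', α⟫ + ⟪c, α⟫ = ⟪g, α⟫ := by rw [← inner_add_left, hcg]
  have hg'min := hmin g' ⟨⟨hg', by linarith⟩, hsat'⟩
  rw [← hcg, eq_zero_of_mem_coneOf_of_inner_eq_zero hα hc (by linarith), add_zero]

theorem eq_of_mem_frobeniusSet_of_mem_add_image_coneOf (hα : ∀ j, 0 < ⟪X j, α⟫) {g g' : Euc s}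
    (hg : g ∈ frobeniusSet X) (hg' : g' ∈ frobeniusSet X) (h : g' ∈ (g + ·) '' coneOf X) :
    g' = g :=
  eq_of_add_image_coneOf_eq hα (hg'.2.2 g hg.1 hg.2.1 (add_image_coneOf_subset X h))

theorem frobeniusSet_finite (hα : ∀ j, 0 < ⟪X j, α⟫) : (frobeniusSet X).Finite := by
  set U := {u : ι → ℕ | ∑ j, (u j : ℝ) • X j ∈ frobeniusSet X}
  have hU : IsAntichain (· ≤ ·) U := by
    intro u hu u' hu' hne hle
    refine hne (funext fun j => ?_)
    set d : ι → ℝ := fun j => (u' j : ℝ) - u j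
    have hd : ∀ j, 0 ≤ d j := fun j => sub_nonneg.2 (by exact_mod_cast hle j)
    have hsum : ∑ j, (u j : ℝ) • X j + ∑ j, d j • X j = ∑ j, (u' j : ℝ) • X j := by
      simp [d, ← Finset.sum_add_distrib, ← add_smul]
    have heq := eq_of_mem_frobeniusSet_of_mem_add_image_coneOf hα hu hu' ⟨_, ⟨d, hd, rfl⟩, hsum⟩
    have hd₀ : d = 0 := eq_zero_of_inner_sum_smul_eq_zero hα hd (by
      rw [add_eq_left.1 (hsum.trans heq), inner_zero_left])
    exact_mod_cast (sub_eq_zero.1 (congrFun hd₀ j)).symm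
  refine ((WellQuasiOrderedLE.finite_of_isAntichain hU).image
    fun u => ∑ j, (u j : ℝ) • X j).subset ?_
  rintro g hg
  obtain ⟨u, rfl⟩ := hg.1
  exact ⟨u, hg, rfl⟩

end FrobeniusSet

theorem stmt1_general {s m : ℕ} (X : Fin m → Euc s)
    (hint : IntegralVecs X)
    (α : Euc s) (hα : ∀ j, 0 < ⟪X j, α⟫) :
    let F : Set (Euc s) :=
      {g | g ∈ sgOf X ∧
        ((g + ·) '' coneOf X) ∩ sgOf X = ((g + ·) '' coneOf X) ∩ latOf X ∧
        ∀ g' ∈ sgOf X,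
          ((g' + ·) '' coneOf X) ∩ sgOf X = ((g' + ·) '' coneOf X) ∩ latOf X →
          (g + ·) '' coneOf X ⊆ (g' + ·) '' coneOf X →
          (g + ·) '' coneOf X = (g' + ·) '' coneOf X}
    F.Nonempty ∧ F.Finite :=
  ⟨frobeniusSet_nonempty hint hα, frobeniusSet_finite hα⟩

/-- The Frobenius set `F = {g ∈ J : g + C_X is a maximal saturated cone}` is
non-empty and finite. -/
theorem stmt1 {s m : ℕ} (hs : 1 ≤ s) (hm : 2 ≤ m) (X : Fin m → Euc s)
    (hint : IntegralVecs X)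
    (hspan : Submodule.span ℝ (Set.range X) = ⊤)
    (α : Euc s) (hα : ∀ j, 0 < ⟪X j, α⟫) :
    let F : Set (Euc s) :=
      {g | g ∈ sgOf X ∧
        ((g + ·) '' coneOf X) ∩ sgOf X = ((g + ·) '' coneOf X) ∩ latOf X ∧
        ∀ g' ∈ sgOf X,
          ((g' + ·) '' coneOf X) ∩ sgOf X = ((g' + ·) '' coneOf X) ∩ latOf X →
          (g + ·) '' coneOf X ⊆ (g' + ·) '' coneOf X →
          (g + ·) '' coneOf X = (g' + ·) '' coneOf X}
    F.Nonempty ∧ F.Finite :=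
  stmt1_general X hint α hα
end
end

section
/- For every integer C₀ ≥ 1 there exists an integer M > 0 such that for all z, z' ∈ J with ‖z − z'‖ ≤ C₀, the Hausdorff distance between the sets A(z) and A(z') (viewed as finite subsets of ℝ^m) is less than M. -/
open scoped BigOperators RealInnerProductSpace
open Filter Topology

noncomputable section

/-!
Solutions `u ∈ ℕ^m` of `u₁X₁ + ⋯ + u_mX_m = z` are compared through pairs `(u, u')` with a
prescribed difference `Lu - Lu' = w`. By Dickson's lemma the set of such pairs has finitely
many minimal elements `(y, y')`; if `(y, y') ≤ (u, u')` then `u - y + y'` solves `Lv = Lu'` and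
lies at distance `‖y - y'‖` from `u`, which is bounded over the finitely many minimal pairs.
Integrality of the `X j` makes the set of possible differences `z - z'` with `‖z - z'‖ ≤ C₀`
finite, so a single bound serves all of them.
-/

open Metric

lemma exists_finite_subset_forall_exists_le {α : Type*} [PartialOrder α] [WellQuasiOrderedLE α]
    (S : Set α) : ∃ F ⊆ S, F.Finite ∧ ∀ x ∈ S, ∃ y ∈ F, y ≤ x :=
  ⟨{x | Minimal (· ∈ S) x}, fun _ hx => hx.prop,
    WellQuasiOrderedLE.finite_of_isAntichain (setOfPred_minimal_antichain _),
    fun _ hx =>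
      let ⟨y, hyx, hy⟩ := (Set.isPWO_of_wellQuasiOrderedLE S).exists_le_minimal hx
      ⟨y, hy, hyx⟩⟩

def natPoint {ι : Type*} (u : ι → ℕ) : EuclideanSpace ℝ ι :=
  WithLp.toLp 2 fun j => (u j : ℝ)

@[simp] lemma natPoint_apply {ι : Type*} (u : ι → ℕ) (j : ι) : natPoint u j = u j := rfl

/-- The set `A(z)` of the paper, for a general additive `L` in place of `u ↦ ∑ u_j X_j`. -/
def natFiber {ι G : Type*} [AddCommGroup G] (L : (ι → ℕ) →+ G) (z : G) :
    Set (EuclideanSpace ℝ ι) :=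
  {v | ∃ u : ι → ℕ, (∀ j, v j = (u j : ℝ)) ∧ L u = z}

section Transport

variable {ι G : Type*} [Fintype ι] [AddCommGroup G] (L : (ι → ℕ) →+ G)

lemma exists_dist_le_of_map_sub_eq (w : G) :
    ∃ B : ℝ, ∀ u u' : ι → ℕ, L u - L u' = w →
      ∃ u'', L u'' = L u' ∧ dist (natPoint u) (natPoint u'') ≤ B := by
  obtain ⟨F, hFS, hF, hbasis⟩ :=
    exists_finite_subset_forall_exists_le {p : (ι → ℕ) × (ι → ℕ) | L p.1 - L p.2 = w}
  obtain ⟨B, hB⟩ := (hF.image fun p => dist (natPoint p.1) (natPoint p.2)).bddAbove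
  refine ⟨B, fun u u' huu' => ?_⟩
  obtain ⟨⟨y, y'⟩, hyF, hy, -⟩ := hbasis (u, u') huu'
  have hyy' : L y - L y' = w := hFS hyF
  refine ⟨u - y + y', ?_, ?_⟩
  · have hu : L u = L (u - y) + L y := by rw [← map_add, tsub_add_cancel_of_le hy]
    rw [map_add, ← sub_eq_zero]
    calc L (u - y) + L y' - L u' = (L u - L u') - (L y - L y') := by rw [hu]; abel
      _ = 0 := by rw [huu', hyy', sub_self]
  · have hsub : natPoint u - natPoint (u - y + y') = natPoint y - natPoint y' := by
      ext j
      simp only [PiLp.sub_apply, natPoint_apply, Pi.add_apply, Pi.sub_apply]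
      push_cast [Nat.cast_sub (hy j)]
      ring
    rw [dist_eq_norm, hsub, ← dist_eq_norm]
    exact hB ⟨(y, y'), hyF, rfl⟩

lemma exists_hausdorffDist_natFiber_le {W : Set G} (hW : W.Finite) :
    ∃ B : ℝ, ∀ a ∈ Set.range L, ∀ b ∈ Set.range L, a - b ∈ W → b - a ∈ W →
      hausdorffDist (natFiber L a) (natFiber L b) ≤ B := by
  choose B hB using exists_dist_le_of_map_sub_eq L
  obtain ⟨B₀, hB₀⟩ := (hW.image B).bddAbove
  have transport : ∀ a, ∀ b ∈ Set.range L, a - b ∈ W →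
      ∀ v ∈ natFiber L a, ∃ v' ∈ natFiber L b, dist v v' ≤ max B₀ 0 := by
    rintro a b ⟨u', rfl⟩ hw v ⟨u, hvu, rfl⟩
    obtain ⟨u'', hu'', hdist⟩ := hB _ u u' rfl
    have hv : v = natPoint u := by ext j; exact hvu j
    refine ⟨natPoint u'', ⟨u'', fun _ => rfl, hu''⟩, ?_⟩
    rw [hv]
    exact hdist.trans ((hB₀ ⟨_, hw, rfl⟩).trans (le_max_left _ _))
  exact ⟨max B₀ 0, fun a ha b hb hab hba =>
    hausdorffDist_le_of_mem_dist (le_max_right _ _) (transport a b hb hab)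
      (transport b a ha hba)⟩

end Transport

def natCombination {ι E : Type*} [Fintype ι] [AddCommGroup E] [Module ℝ E] (X : ι → E) :
    (ι → ℕ) →+ E where
  toFun u := ∑ j, (u j : ℝ) • X j
  map_zero' := by simp
  map_add' u v := by simp [add_smul, Finset.sum_add_distrib]

def integralPoints (s : ℕ) : AddSubgroup (Euc s) where
  carrier := {w | ∀ i, ∃ n : ℤ, w i = n}
  zero_mem' _ := ⟨0, by simp⟩
  add_mem' ha hb i := by
    obtain ⟨p, hp⟩ := ha i
    obtain ⟨q, hq⟩ := hb i
    exact ⟨p + q, by simp [hp, hq]⟩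
  neg_mem' ha i := by
    obtain ⟨p, hp⟩ := ha i
    exact ⟨-p, by simp [hp]⟩

lemma sgOf_subset_integralPoints {s m : ℕ} {X : Fin m → Euc s} (hint : IntegralVecs X) :
    sgOf X ⊆ integralPoints s := by
  rintro _ ⟨u, rfl⟩
  refine AddSubgroup.sum_mem _ fun j _ => ?_
  rw [Nat.cast_smul_eq_nsmul]
  exact AddSubgroup.nsmul_mem _ (show X j ∈ integralPoints s from hint j) _

lemma finite_integralPoints_inter_closedBall (s : ℕ) (r : ℝ) :
    ((integralPoints s : Set (Euc s)) ∩ closedBall 0 r).Finite := by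
  refine ((Set.Finite.pi fun _ => Set.finite_Icc (-⌈r⌉) ⌈r⌉).image
    fun n : Fin s → ℤ => (WithLp.toLp 2 fun i => (n i : ℝ) : Euc s)).subset ?_
  rintro w ⟨hw, hwr⟩
  choose n hn using hw
  refine ⟨n, fun i _ => ?_, by ext i; exact (hn i).symm⟩
  have hi : |(n i : ℝ)| ≤ ⌈r⌉ :=
    (hn i ▸ PiLp.norm_apply_le w i).trans ((mem_closedBall_zero_iff.1 hwr).trans (Int.le_ceil r))
  exact abs_le.1 (by exact_mod_cast hi)

theorem stmt4_general {s m : ℕ} (X : Fin m → Euc s)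
    (hint : IntegralVecs X)
    (C₀ : ℕ) :
    ∃ M : ℕ, 0 < M ∧ ∀ z ∈ sgOf X, ∀ z' ∈ sgOf X, ‖z - z'‖ ≤ (C₀ : ℝ) →
      Metric.hausdorffDist
        {v : EuclideanSpace ℝ (Fin m) |
          ∃ u : Fin m → ℕ, (∀ j, v j = (u j : ℝ)) ∧ ∑ j, (u j : ℝ) • X j = z}
        {v : EuclideanSpace ℝ (Fin m) |
          ∃ u : Fin m → ℕ, (∀ j, v j = (u j : ℝ)) ∧ ∑ j, (u j : ℝ) • X j = z'}
        < (M : ℝ) := by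
  obtain ⟨B, hB⟩ := exists_hausdorffDist_natFiber_le (natCombination X)
    (finite_integralPoints_inter_closedBall s C₀)
  have hdiff : ∀ {a b}, a ∈ sgOf X → b ∈ sgOf X → ‖a - b‖ ≤ (C₀ : ℝ) →
      a - b ∈ (integralPoints s : Set (Euc s)) ∩ closedBall 0 C₀ := fun ha hb hab =>
    ⟨sub_mem (sgOf_subset_integralPoints hint ha) (sgOf_subset_integralPoints hint hb),
      mem_closedBall_zero_iff.2 hab⟩
  refine ⟨⌈B⌉₊ + 1, Nat.succ_pos _, fun z hz z' hz' hzz' => ?_⟩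
  calc hausdorffDist (natFiber (natCombination X) z) (natFiber (natCombination X) z')
      ≤ B := hB z hz z' hz' (hdiff hz hz' hzz') (hdiff hz' hz (by rwa [norm_sub_rev]))
    _ < ⌈B⌉₊ + 1 := (Nat.le_ceil B).trans_lt (lt_add_one _)
    _ = ((⌈B⌉₊ + 1 : ℕ) : ℝ) := by push_cast; rfl

/-- For every integer `C₀ ≥ 1` there is an integer `M > 0` such that the Hausdorff
distance between `A(z)` and `A(z')` (as subsets of `ℝ^m`) is less than `M`,
whenever `z, z' ∈ J` and `‖z - z'‖ ≤ C₀`. -/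
theorem stmt4 {s m : ℕ} (hs : 1 ≤ s) (hm : 2 ≤ m) (X : Fin m → Euc s)
    (hint : IntegralVecs X)
    (hspan : Submodule.span ℝ (Set.range X) = ⊤)
    (α : Euc s) (hα : ∀ j, 0 < ⟪X j, α⟫)
    (C₀ : ℕ) (hC₀ : 1 ≤ C₀) :
    ∃ M : ℕ, 0 < M ∧ ∀ z ∈ sgOf X, ∀ z' ∈ sgOf X, ‖z - z'‖ ≤ (C₀ : ℝ) →
      Metric.hausdorffDist
        {v : EuclideanSpace ℝ (Fin m) |
          ∃ u : Fin m → ℕ, (∀ j, v j = (u j : ℝ)) ∧ ∑ j, (u j : ℝ) • X j = z}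
        {v : EuclideanSpace ℝ (Fin m) |
          ∃ u : Fin m → ℕ, (∀ j, v j = (u j : ℝ)) ∧ ∑ j, (u j : ℝ) • X j = z'}
        < (M : ℝ) :=
  stmt4_general X hint C₀
end
end

section
/- Let c > 0 be a constant and let (b_n)_{n≥1} be a sequence of non-negative real numbers such that b_n + b_m ≤ b_{n+m} + c·log(m+n) for all m, n ≥ 1. Then the limit lim_{n→∞} b_n/n exists in [0, +∞]. -/
open scoped BigOperators RealInnerProductSpace
open Filter Topology

noncomputable section

/-!
Fix `n` and let `G = (b_n - c (log n + 2 log 2)) / n`. Doubling gives `b_{2^k n} ≥ 2^k n G`,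
since the loss `c log (2^k n)` at the `k`-th doubling is summable against `2^k`. Every `N ≥ n`
splits as `2^k n + r` with `r < N / 2`; peeling off such blocks recursively takes at most
`log₂ N` steps, each losing at most `c log N`, so `b_N ≥ (N - 2n) G - c log₂ N log N`. Hence
`liminf b_N / N ≥ b_n / n - O(log n / n)` for every `n`, which is at least `limsup b_n / n`.
-/

open Real

theorem Nat.exists_two_pow_mul_le_lt {n N : ℕ} (hn : 0 < n) (hN : n ≤ N) :
    ∃ k, 2 ^ k * n ≤ N ∧ N < 2 * (2 ^ k * n) := by
  have hq : N / n ≠ 0 := (Nat.div_pos hN hn).ne'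
  refine ⟨Nat.log 2 (N / n), ?_, ?_⟩
  · exact (Nat.le_div_iff_mul_le hn).1 (Nat.pow_log_le_self 2 hq)
  · rw [← mul_assoc, ← pow_succ']
    exact (Nat.div_lt_iff_lt_mul hn).1 (Nat.lt_pow_succ_log_self one_lt_two _)

theorem logb_two_mul_log_add_le {r N : ℝ} (hr : 1 ≤ r) (hrN : 2 * r ≤ N) :
    logb 2 r * log r + log N ≤ logb 2 N * log N := by
  have hlogb : logb 2 r ≤ logb 2 N - 1 := by
    rw [← logb_self_eq_one one_lt_two, ← logb_div (by linarith) two_ne_zero]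
    exact logb_le_logb_of_le one_lt_two (by linarith) (by linarith)
  have hlog : log r ≤ log N := log_le_log (by linarith) (by linarith)
  nlinarith [logb_nonneg one_lt_two hr, log_nonneg hr]

theorem tendsto_sub_mul_sub_logb_mul_log_div (a d G : ℝ) :
    Tendsto (fun N : ℕ => ((N - a) * G - d * logb 2 N * log N) / N) atTop (𝓝 G) := by
  have hlog : Tendsto (fun x : ℝ => log x ^ 2 / x) atTop (𝓝 0) := by
    simpa using tendsto_pow_log_div_mul_add_atTop 1 0 2 one_ne_zero
  have hx : Tendsto (fun x : ℝ => G - a * G * x⁻¹ - d / log 2 * (log x ^ 2 / x)) atTop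
      (𝓝 G) := by
    simpa using ((tendsto_inv_atTop_zero.const_mul (a * G)).const_sub G).sub
      (hlog.const_mul (d / log 2))
  refine (hx.comp tendsto_natCast_atTop_atTop).congr' ?_
  filter_upwards [eventually_ne_atTop 0] with N hN
  simp only [Function.comp_apply, logb]
  field_simp

theorem tendsto_mul_log_add_div (c a : ℝ) :
    Tendsto (fun n : ℕ => c * (log n + a) / n) atTop (𝓝 0) := by
  have hlog : Tendsto (fun x : ℝ => log x / x) atTop (𝓝 0) := by
    simpa using tendsto_pow_log_div_mul_add_atTop 1 0 1 one_ne_zero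
  have hx : Tendsto (fun x : ℝ => c * (log x / x) + c * a * x⁻¹) atTop (𝓝 0) := by
    simpa using (hlog.const_mul c).add (tendsto_inv_atTop_zero.const_mul (c * a))
  refine (hx.comp tendsto_natCast_atTop_atTop).congr' ?_
  filter_upwards [eventually_ne_atTop 0] with N hN
  simp only [Function.comp_apply]
  field_simp

def SuperadditiveUpToLog (c : ℝ) (b : ℕ → ℝ) : Prop :=
  ∀ m n : ℕ, 1 ≤ m → 1 ≤ n → b n + b m ≤ b (n + m) + c * Real.log (m + n)

namespace SuperadditiveUpToLog

variable {c : ℝ} {b : ℕ → ℝ}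

theorem two_pow_mul_le (h : SuperadditiveUpToLog c b) {n : ℕ} (hn : 1 ≤ n) (k : ℕ) :
    2 ^ k * (b n - c * (log n + 2 * log 2)) + c * (log n + (k + 2) * log 2) ≤ b (2 ^ k * n) := by
  induction k with
  | zero => simp
  | succ k ih =>
    have hm : 1 ≤ 2 ^ k * n := Nat.one_le_iff_ne_zero.2 (by positivity)
    have hdouble := h _ _ hm hm
    have hlog : log (((2 ^ k * n : ℕ) : ℝ) + (2 ^ k * n : ℕ)) = (k + 1) * log 2 + log n := by
      rw [← two_mul, Nat.cast_mul, Nat.cast_pow, ← mul_assoc, Nat.cast_ofNat, ← pow_succ',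
        log_mul (by positivity) (by positivity), log_pow]
      push_cast; ring
    rw [hlog, show 2 ^ k * n + 2 ^ k * n = 2 ^ (k + 1) * n by ring] at hdouble
    push_cast [pow_succ'] at hdouble ⊢
    linarith

theorem le_of_forall_two_pow_mul_le (h : SuperadditiveUpToLog c b) (hb : ∀ n, 0 ≤ b n)
    (hc : 0 ≤ c) {n : ℕ} (hn : 1 ≤ n) {G : ℝ} (hG : 0 ≤ G)
    (hpow : ∀ k : ℕ, 2 ^ k * n * G ≤ b (2 ^ k * n))
    (N : ℕ) : (N - 2 * n) * G - c * logb 2 N * log N ≤ b N := by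
  induction N using Nat.strong_induction_on with | _ N ih =>
  have hloss : 0 ≤ c * logb 2 N * log N := by
    have := log_natCast_nonneg N
    have := log_pos one_lt_two
    unfold logb
    positivity
  rcases lt_or_ge N n with hNn | hnN
  · have : ((N : ℝ) - 2 * n) * G ≤ 0 :=
      mul_nonpos_of_nonpos_of_nonneg (by linarith [(Nat.cast_lt (α := ℝ)).2 hNn]) hG
    linarith [hb N]
  obtain ⟨k, hle, hlt⟩ := Nat.exists_two_pow_mul_le_lt hn hnN
  obtain ⟨r, rfl⟩ := Nat.exists_eq_add_of_le hle
  set m := 2 ^ k * n with hm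
  have hpowk : (m : ℝ) * G ≤ b m := by simpa [hm] using hpow k
  rcases r.eq_zero_or_pos with rfl | hr
  · have := mul_nonneg (Nat.cast_nonneg (α := ℝ) n) hG
    simp only [add_zero] at hloss ⊢
    linarith
  have hsplit := h r m hr (Nat.one_le_iff_ne_zero.2 (by positivity))
  have hr_ih := ih r (by omega)
  have hlog := logb_two_mul_log_add_le (r := r) (N := ((m + r : ℕ) : ℝ))
    (by exact_mod_cast hr) (by exact_mod_cast (by omega : 2 * r ≤ m + r))
  have hloss_split := mul_le_mul_of_nonneg_left hlog hc
  rw [add_comm (r : ℝ)] at hsplit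
  push_cast at hlog hloss_split ⊢
  calc ((m : ℝ) + r - 2 * n) * G - c * logb 2 (m + r) * log (m + r)
      ≤ m * G + ((r - 2 * n) * G - c * logb 2 r * log r) - c * log (m + r) := by
        linarith
    _ ≤ b (m + r) := by linarith

theorem ofReal_div_sub_le_liminf (h : SuperadditiveUpToLog c b) (hb : ∀ n, 0 ≤ b n)
    (hc : 0 ≤ c) {n : ℕ} (hn : 1 ≤ n) :
    ENNReal.ofReal (b n / n - c * (log n + 2 * log 2) / n) ≤
      liminf (fun N : ℕ => ENNReal.ofReal (b N / N)) atTop := by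
  set G := b n / n - c * (log n + 2 * log 2) / n
  rcases le_or_gt G 0 with hG | hG
  · simp [ENNReal.ofReal_of_nonpos hG]
  have hn₀ : (0 : ℝ) < n := by exact_mod_cast hn
  have hnG : n * G = b n - c * (log n + 2 * log 2) := by
    simp only [G]; field_simp
  have hpow (k : ℕ) : 2 ^ k * n * G ≤ b (2 ^ k * n) := by
    have hextra : 0 ≤ c * (log n + (k + 2) * log 2) :=
      mul_nonneg hc (add_nonneg (log_natCast_nonneg n) (by positivity))
    have := h.two_pow_mul_le hn k
    rw [mul_assoc, hnG]
    linarith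
  have hlower (N : ℕ) : ((N - 2 * n) * G - c * logb 2 N * log N) / N ≤ b N / N :=
    div_le_div_of_nonneg_right (h.le_of_forall_two_pow_mul_le hb hc hn hG.le hpow N) N.cast_nonneg
  calc ENNReal.ofReal G
      = liminf (fun N : ℕ => ENNReal.ofReal (((N - 2 * n) * G - c * logb 2 N * log N) / N))
          atTop :=
        ((ENNReal.tendsto_ofReal (tendsto_sub_mul_sub_logb_mul_log_div _ _ _)).liminf_eq).symm
    _ ≤ liminf (fun N : ℕ => ENNReal.ofReal (b N / N)) atTop :=
        liminf_le_liminf (Eventually.of_forall fun N => ENNReal.ofReal_le_ofReal (hlower N))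

end SuperadditiveUpToLog

/-- If `(b_n)` is a sequence of non-negative reals with
`b_n + b_m ≤ b_{n+m} + c log(m+n)` for all `m, n ≥ 1` (where `c > 0`), then
`lim_{n→∞} b_n / n` exists in `[0, +∞]`. -/
theorem stmt6 (c : ℝ) (hc : 0 < c) (b : ℕ → ℝ) (hb : ∀ n, 0 ≤ b n)
    (hsub : ∀ m n : ℕ, 1 ≤ m → 1 ≤ n →
      b n + b m ≤ b (n + m) + c * Real.log (m + n)) :
    ∃ L : ENNReal, Filter.Tendsto (fun n : ℕ => ENNReal.ofReal (b n / n))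
      Filter.atTop (nhds L) := by
  set f : ℕ → ENNReal := fun n => ENNReal.ofReal (b n / n)
  set e : ℕ → ℝ := fun n => c * (log n + 2 * log 2) / n
  have hf (n : ℕ) (hn : 1 ≤ n) : f n ≤ liminf f atTop + ENNReal.ofReal (e n) :=
    calc f n = ENNReal.ofReal (b n / n - e n + e n) := by rw [sub_add_cancel]
      _ ≤ ENNReal.ofReal (b n / n - e n) + ENNReal.ofReal (e n) := ENNReal.ofReal_add_le
      _ ≤ liminf f atTop + ENNReal.ofReal (e n) := by
        gcongr
        exact SuperadditiveUpToLog.ofReal_div_sub_le_liminf hsub hb hc.le hn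
  have he : Tendsto (fun n => liminf f atTop + ENNReal.ofReal (e n)) atTop
      (𝓝 (liminf f atTop)) := by
    simpa using
      tendsto_const_nhds.add (ENNReal.tendsto_ofReal (tendsto_mul_log_add_div c (2 * log 2)))
  refine ⟨liminf f atTop, tendsto_of_le_liminf_of_limsup_le le_rfl ?_⟩
  calc limsup f atTop ≤ limsup (fun n => liminf f atTop + ENNReal.ofReal (e n)) atTop :=
        limsup_le_limsup ((eventually_ge_atTop 1).mono hf)
    _ = liminf f atTop := he.limsup_eq
end
end

section
/- Suppose the differences {X_i − X_j : 1 ≤ i, j ≤ m} span ℝ^d (i.e. X₁,…,X_m are not coplanar) and let β be an interior point of the convex hull Δ_X of X₁,…,X_m. Then the equation ∇Z(t)/Z(t) = β has a unique solution t_β ∈ ℝ^d; under the constraints Σ p_j = 1, Σ p_j X_j = β, the entropy h(p) attains its maximum at the unique maximal point p* given by p*_j = e^{⟨t_β, X_j⟩}/Z(t_β) for j = 1,…,m; and the maximum value is h(p*) = log Z(t_β) − ⟨t_β, β⟩. -/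
open scoped BigOperators RealInnerProductSpace
open Filter Topology

noncomputable section

/-! For every `t`, Gibbs' inequality against the distribution `p_t(j) = e^{⟨t, X_j⟩}/Z(t)` gives
`h(p) ≤ -∑ p_j log p_t(j) = log Z(t) - ⟨t, β⟩` for each `p` with `∑ p_j = 1`, `∑ p_j X_j = β`,
with equality only at `p = p_t`. The right-hand side is smooth, tends to `+∞` at infinity because
`β` is interior to the hull, and its gradient at `t` is `∑ p_t(j) X_j - β`; at a minimiser `p_t` is
therefore feasible, so it attains the maximum of `h`. Two solutions `t, t'` give two maximisers
`p_t, p_{t'}`, which must coincide; as the `X_i - X_j` span, `⟨t - t', ·⟩ = 0` and `t = t'`. -/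

open Real InformationTheory

section GibbsInequality

variable {ι : Type*} [Fintype ι] {p q : ι → ℝ}

lemma mul_klFun_div {a b : ℝ} (hb : b ≠ 0) :
    b * klFun (a / b) = a * log a - a * log b + b - a := by
  rcases eq_or_ne a 0 with rfl | ha
  · simp [klFun]
  · rw [klFun, log_div ha hb]
    field_simp

lemma mul_klFun_div_nonneg {a b : ℝ} (ha : 0 ≤ a) (hb : 0 < b) : 0 ≤ b * klFun (a / b) :=
  mul_nonneg hb.le (klFun_nonneg (div_nonneg ha hb.le))

lemma sum_mul_klFun_div (hq : ∀ j, 0 < q j) (hpq : ∑ j, p j = ∑ j, q j) :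
    ∑ j, q j * klFun (p j / q j) = ∑ j, p j * log (p j) - ∑ j, p j * log (q j) := by
  simp only [mul_klFun_div (hq _).ne', Finset.sum_sub_distrib, Finset.sum_add_distrib, hpq]
  ring

theorem sum_mul_log_le_sum_mul_log (hp : ∀ j, 0 ≤ p j) (hq : ∀ j, 0 < q j)
    (hpq : ∑ j, p j = ∑ j, q j) :
    ∑ j, p j * log (q j) ≤ ∑ j, p j * log (p j) := by
  have := Finset.sum_nonneg fun j (_ : j ∈ Finset.univ) ↦ mul_klFun_div_nonneg (hp j) (hq j)
  linarith [sum_mul_klFun_div hq hpq]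

theorem eq_of_sum_mul_log_eq (hp : ∀ j, 0 ≤ p j) (hq : ∀ j, 0 < q j)
    (hpq : ∑ j, p j = ∑ j, q j) (h : ∑ j, p j * log (q j) = ∑ j, p j * log (p j)) :
    p = q := by
  have hzero := (Finset.sum_eq_zero_iff_of_nonneg fun j _ ↦ mul_klFun_div_nonneg (hp j) (hq j)).1
    (by rw [sum_mul_klFun_div hq hpq, h, sub_self])
  funext j
  have := (mul_eq_zero.1 (hzero j (Finset.mem_univ j))).resolve_left (hq j).ne'
  exact (div_eq_one_iff_eq (hq j).ne').1 ((klFun_eq_zero_iff (div_nonneg (hp j) (hq j).le)).1 this)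

end GibbsInequality

section GibbsDistribution

variable {E : Type*} [NormedAddCommGroup E] [InnerProductSpace ℝ E]
  {ι : Type*} [Fintype ι] (X : ι → E)

def partitionFn (t : E) : ℝ := ∑ j, exp ⟪t, X j⟫

def gibbs (t : E) (j : ι) : ℝ := exp ⟪t, X j⟫ / partitionFn X t

lemma exp_inner_le_partitionFn (t : E) (j : ι) : exp ⟪t, X j⟫ ≤ partitionFn X t :=
  Finset.single_le_sum (f := fun j ↦ exp ⟪t, X j⟫) (fun _ _ ↦ (exp_pos _).le) (Finset.mem_univ j)

lemma partitionFn_pos [Nonempty ι] (t : E) : 0 < partitionFn X t :=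
  (exp_pos _).trans_le (exp_inner_le_partitionFn X t (Classical.arbitrary ι))

lemma inner_le_log_partitionFn (t : E) (j : ι) : ⟪t, X j⟫ ≤ log (partitionFn X t) :=
  (le_log_iff_exp_le ((exp_pos _).trans_le (exp_inner_le_partitionFn X t j))).2
    (exp_inner_le_partitionFn X t j)

lemma sum_gibbs_smul (t : E) :
    ∑ j, gibbs X t j • X j = (partitionFn X t)⁻¹ • ∑ j, exp ⟪t, X j⟫ • X j := by
  simp only [Finset.smul_sum, smul_smul, gibbs, div_eq_inv_mul]

variable [Nonempty ι]

lemma gibbs_pos (t : E) (j : ι) : 0 < gibbs X t j :=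
  div_pos (exp_pos _) (partitionFn_pos X t)

lemma sum_gibbs (t : E) : ∑ j, gibbs X t j = 1 := by
  simp only [gibbs, ← Finset.sum_div]
  exact div_self (partitionFn_pos X t).ne'

lemma log_gibbs (t : E) (j : ι) : log (gibbs X t j) = ⟪t, X j⟫ - log (partitionFn X t) := by
  rw [gibbs, log_div (exp_pos _).ne' (partitionFn_pos X t).ne', log_exp]

lemma sum_gibbs_smul_eq_iff {t β : E} :
    ∑ j, gibbs X t j • X j = β ↔ ∑ j, exp ⟪t, X j⟫ • X j = partitionFn X t • β := by
  rw [sum_gibbs_smul, inv_smul_eq_iff₀ (partitionFn_pos X t).ne']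

lemma neg_sum_mul_log_gibbs {t β : E} {p : ι → ℝ} (hp1 : ∑ j, p j = 1)
    (hpX : ∑ j, p j • X j = β) :
    -∑ j, p j * log (gibbs X t j) = log (partitionFn X t) - ⟪t, β⟫ := by
  simp only [log_gibbs, mul_sub, Finset.sum_sub_distrib, ← Finset.sum_mul, hp1, ← hpX,
    inner_sum, real_inner_smul_right]
  ring

theorem gibbs_injective (hspan : Submodule.span ℝ {v : E | ∃ i j, v = X i - X j} = ⊤) :
    Function.Injective (gibbs X) := by
  intro t t' h
  have hconst : ∀ j, ⟪t - t', X j⟫ = log (partitionFn X t) - log (partitionFn X t') := by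
    intro j
    have := congrArg log (congrFun h j)
    rw [log_gibbs, log_gibbs] at this
    rw [inner_sub_left]
    linarith
  have hker : Submodule.span ℝ {v : E | ∃ i j, v = X i - X j} ≤
      LinearMap.ker (innerₛₗ ℝ (t - t')) := by
    rw [Submodule.span_le]
    rintro _ ⟨i, j, rfl⟩
    rw [SetLike.mem_coe, LinearMap.mem_ker, innerₛₗ_apply_apply, inner_sub_right, hconst, hconst,
      sub_self]
  rw [hspan] at hker
  exact sub_eq_zero.1 (inner_self_eq_zero.1 (hker Submodule.mem_top))

end GibbsDistribution

section Entropy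

variable {E : Type*} [NormedAddCommGroup E] [InnerProductSpace ℝ E]
  {m : ℕ} [Nonempty (Fin m)] (X : Fin m → E) {β : E} {p : Fin m → ℝ}

theorem entropy_le_log_partitionFn_sub_inner (t : E) (hp0 : ∀ j, 0 ≤ p j)
    (hp1 : ∑ j, p j = 1) (hpX : ∑ j, p j • X j = β) :
    entropy p ≤ log (partitionFn X t) - ⟪t, β⟫ := by
  rw [← neg_sum_mul_log_gibbs X hp1 hpX, entropy, neg_le_neg_iff]
  exact sum_mul_log_le_sum_mul_log hp0 (gibbs_pos X t) (by rw [hp1, sum_gibbs])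

theorem eq_gibbs_of_entropy_eq (t : E) (hp0 : ∀ j, 0 ≤ p j)
    (hp1 : ∑ j, p j = 1) (hpX : ∑ j, p j • X j = β)
    (h : entropy p = log (partitionFn X t) - ⟪t, β⟫) :
    p = gibbs X t := by
  rw [← neg_sum_mul_log_gibbs X hp1 hpX, entropy, neg_inj] at h
  exact eq_of_sum_mul_log_eq hp0 (gibbs_pos X t) (by rw [hp1, sum_gibbs]) h.symm

theorem entropy_gibbs {t : E} (ht : ∑ j, gibbs X t j • X j = β) :
    entropy (gibbs X t) = log (partitionFn X t) - ⟪t, β⟫ :=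
  neg_sum_mul_log_gibbs X (sum_gibbs X t) ht

theorem gibbs_eq_of_sum_gibbs_smul_eq {t t' : E} (ht : ∑ j, gibbs X t j • X j = β)
    (ht' : ∑ j, gibbs X t' j • X j = β) : gibbs X t' = gibbs X t := by
  have hle : entropy (gibbs X t') ≤ entropy (gibbs X t) := by
    rw [entropy_gibbs X ht]
    exact entropy_le_log_partitionFn_sub_inner X t (fun j ↦ (gibbs_pos X t' j).le)
      (sum_gibbs X t') ht'
  have hge : entropy (gibbs X t) ≤ entropy (gibbs X t') := by
    rw [entropy_gibbs X ht']
    exact entropy_le_log_partitionFn_sub_inner X t' (fun j ↦ (gibbs_pos X t j).le)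
      (sum_gibbs X t) ht
  exact eq_gibbs_of_entropy_eq X t (fun j ↦ (gibbs_pos X t' j).le) (sum_gibbs X t') ht'
    ((le_antisymm hle hge).trans (entropy_gibbs X ht))

end Entropy

section Existence

variable {E : Type*} [NormedAddCommGroup E] [InnerProductSpace ℝ E]
  {ι : Type*} (X : ι → E) {β : E}

theorem exists_pos_mul_norm_le_inner_sub (hβ : β ∈ interior (convexHull ℝ (Set.range X))) :
    ∃ ε > 0, ∀ t, ∃ j, ε * ‖t‖ ≤ ⟪t, X j⟫ - ⟪t, β⟫ := by
  obtain ⟨ε, hε, hball⟩ :=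
    Metric.nhds_basis_closedBall.mem_iff.1 (mem_interior_iff_mem_nhds.1 hβ)
  refine ⟨ε, hε, fun t ↦ ?_⟩
  have hy : β + (ε / ‖t‖) • t ∈ convexHull ℝ (Set.range X) := by
    apply hball
    rw [Metric.mem_closedBall, dist_eq_norm, add_sub_cancel_left, norm_smul, Real.norm_eq_abs,
      abs_div, abs_norm, abs_of_pos hε]
    rcases eq_or_ne ‖t‖ 0 with h | h
    · simp [h, hε.le]
    · rw [div_mul_cancel₀ _ h]
  obtain ⟨_, ⟨j, rfl⟩, hj⟩ :=
    ((innerₛₗ ℝ t).convexOn convex_univ).exists_ge_of_mem_convexHull (Set.subset_univ _) hy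
  refine ⟨j, ?_⟩
  rw [innerₛₗ_apply_apply, innerₛₗ_apply_apply, inner_add_right, real_inner_smul_right,
    real_inner_self_eq_norm_sq] at hj
  rcases eq_or_ne ‖t‖ 0 with h | h
  · simp only [h, mul_zero, div_zero] at hj ⊢
    linarith
  · field_simp at hj
    linarith

variable [Fintype ι]

theorem tendsto_log_partitionFn_sub_inner [ProperSpace E]
    (hβ : β ∈ interior (convexHull ℝ (Set.range X))) :
    Tendsto (fun t ↦ log (partitionFn X t) - ⟪t, β⟫) (cocompact E) atTop := by
  obtain ⟨ε, hε, hcoer⟩ := exists_pos_mul_norm_le_inner_sub X hβ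
  refine tendsto_atTop_mono (fun t ↦ ?_) (tendsto_norm_cocompact_atTop.const_mul_atTop hε)
  obtain ⟨j, hj⟩ := hcoer t
  linarith [inner_le_log_partitionFn X t j]

theorem hasFDerivAt_log_partitionFn_sub_inner [Nonempty ι] (t : E) :
    HasFDerivAt (fun t ↦ log (partitionFn X t) - ⟪t, β⟫)
      (innerSL ℝ (∑ j, gibbs X t j • X j - β)) t := by
  have hinner : ∀ x : E, HasFDerivAt (fun t ↦ ⟪t, x⟫) (innerSL ℝ x) t := fun x ↦
    (innerSL ℝ x).hasFDerivAt.congr_of_eventuallyEq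
      (Eventually.of_forall fun _ ↦ real_inner_comm _ _)
  have hZ : HasFDerivAt (partitionFn X) (∑ j, exp ⟪t, X j⟫ • innerSL ℝ (X j)) t :=
    HasFDerivAt.fun_sum fun j _ ↦ (hinner (X j)).exp
  refine ((hZ.log (partitionFn_pos X t).ne').sub (hinner β)).congr_fderiv ?_
  rw [sum_gibbs_smul, map_sub, map_smul, map_sum]
  simp [map_smul]

theorem exists_sum_gibbs_smul_eq [ProperSpace E] [Nonempty ι]
    (hβ : β ∈ interior (convexHull ℝ (Set.range X))) :
    ∃ t, ∑ j, gibbs X t j • X j = β := by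
  have hcont : Continuous fun t ↦ log (partitionFn X t) - ⟪t, β⟫ :=
    continuous_iff_continuousAt.2 fun t ↦
      (hasFDerivAt_log_partitionFn_sub_inner X t).continuousAt
  obtain ⟨t, ht⟩ := hcont.exists_forall_le (tendsto_log_partitionFn_sub_inner X hβ)
  have hzero := IsLocalMin.hasFDerivAt_eq_zero (Eventually.of_forall ht)
    (hasFDerivAt_log_partitionFn_sub_inner X t)
  refine ⟨t, sub_eq_zero.1 ?_⟩
  rw [← norm_eq_zero, ← innerSL_apply_norm ℝ, hzero, norm_zero]

end Existence

theorem stmt8_general {d m : ℕ} (X : Fin m → Euc d)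
    (hspan : Submodule.span ℝ {v : Euc d | ∃ i j, v = X i - X j} = ⊤)
    (β : Euc d) (hβ : β ∈ interior (convexHull ℝ (Set.range X))) :
    ∃ t : Euc d,
      ((∑ j, Real.exp ⟪t, X j⟫ • X j) = (∑ j, Real.exp ⟪t, X j⟫) • β) ∧
      (∀ t' : Euc d,
        (∑ j, Real.exp ⟪t', X j⟫ • X j) = (∑ j, Real.exp ⟪t', X j⟫) • β → t' = t) ∧
      (let pstar : Fin m → ℝ := fun j => Real.exp ⟪t, X j⟫ / ∑ i, Real.exp ⟪t, X i⟫
       (∀ j, 0 ≤ pstar j) ∧ (∑ j, pstar j = 1) ∧ (∑ j, pstar j • X j = β) ∧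
       (∀ p : Fin m → ℝ, (∀ j, 0 ≤ p j) → ∑ j, p j = 1 → ∑ j, p j • X j = β →
          entropy p ≤ entropy pstar) ∧
       (∀ p : Fin m → ℝ, (∀ j, 0 ≤ p j) → ∑ j, p j = 1 → ∑ j, p j • X j = β →
          entropy p = entropy pstar → p = pstar) ∧
       entropy pstar = Real.log (∑ j, Real.exp ⟪t, X j⟫) - ⟪t, β⟫) := by
  have : Nonempty (Fin m) :=
    Set.range_nonempty_iff_nonempty.1 (convexHull_nonempty_iff.1 ⟨β, interior_subset hβ⟩)
  obtain ⟨t, ht⟩ := exists_sum_gibbs_smul_eq X hβ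
  have hentropy := entropy_gibbs X ht
  refine ⟨t, (sum_gibbs_smul_eq_iff X).1 ht, fun t' ht' ↦ gibbs_injective X hspan
    (gibbs_eq_of_sum_gibbs_smul_eq X ht ((sum_gibbs_smul_eq_iff X).2 ht')), ?_⟩
  refine ⟨fun j ↦ (gibbs_pos X t j).le, sum_gibbs X t, ht, fun p hp0 hp1 hpX ↦ ?_,
    fun p hp0 hp1 hpX h ↦ ?_, hentropy⟩
  · exact (entropy_le_log_partitionFn_sub_inner X t hp0 hp1 hpX).trans_eq hentropy.symm
  · exact eq_gibbs_of_entropy_eq X t hp0 hp1 hpX (h.trans hentropy)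

/-- Maximum entropy principle: if the differences `X_i - X_j` span `ℝ^d` and `β`
is interior to the convex hull of the `X_j`, then `∇Z(t)/Z(t) = β` has a unique
solution `t_β`; under the constraints `∑ p_j = 1`, `∑ p_j X_j = β` the entropy
attains its maximum exactly at `p*_j = e^{⟨t_β, X_j⟩}/Z(t_β)`, and the maximum
is `log Z(t_β) - ⟨t_β, β⟩`. -/
theorem stmt8 {d m : ℕ} (hm : 2 ≤ m) (X : Fin m → Euc d)
    (hspan : Submodule.span ℝ {v : Euc d | ∃ i j, v = X i - X j} = ⊤)
    (β : Euc d) (hβ : β ∈ interior (convexHull ℝ (Set.range X))) :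
    ∃ t : Euc d,
      ((∑ j, Real.exp ⟪t, X j⟫ • X j) = (∑ j, Real.exp ⟪t, X j⟫) • β) ∧
      (∀ t' : Euc d,
        (∑ j, Real.exp ⟪t', X j⟫ • X j) = (∑ j, Real.exp ⟪t', X j⟫) • β → t' = t) ∧
      (let pstar : Fin m → ℝ := fun j => Real.exp ⟪t, X j⟫ / ∑ i, Real.exp ⟪t, X i⟫
       (∀ j, 0 ≤ pstar j) ∧ (∑ j, pstar j = 1) ∧ (∑ j, pstar j • X j = β) ∧
       (∀ p : Fin m → ℝ, (∀ j, 0 ≤ p j) → ∑ j, p j = 1 → ∑ j, p j • X j = β →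
          entropy p ≤ entropy pstar) ∧
       (∀ p : Fin m → ℝ, (∀ j, 0 ≤ p j) → ∑ j, p j = 1 → ∑ j, p j • X j = β →
          entropy p = entropy pstar → p = pstar) ∧
       entropy pstar = Real.log (∑ j, Real.exp ⟪t, X j⟫) - ⟪t, β⟫) :=
  stmt8_general X hspan β hβ
end
end

section
/- Suppose the differences {X_i − X_j : 1 ≤ i, j ≤ m} span ℝ^d and let β be an interior point of Δ_X. Then, under the constraints Σ p_j = 1 and Σ p_j X_j = β, the entropy h(p) attains its maximum at a point p* with all coordinates strictly positive, and this maximal point is unique. -/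
open scoped BigOperators RealInnerProductSpace
open Filter Topology

noncomputable section

/-!
The admissible weight vectors form a compact convex set on which the entropy is continuous and
strictly concave, so it has exactly one maximizer. Because `β` is interior to the hull, some
admissible weight vector is strictly positive. Since `x ↦ -x log x` has infinite slope at `0`,
moving a weight vector with a zero coordinate slightly towards a strictly positive one increases
the entropy; hence the maximizer has no zero coordinate.
-/

open Set

section BarycentricWeights

variable {ι E : Type*} [Fintype ι] [AddCommGroup E] [Module ℝ E]

def barycentricWeights (X : ι → E) (β : E) : Set (ι → ℝ) :=
  stdSimplex ℝ ι ∩ Fintype.linearCombination ℝ X ⁻¹' {β}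

theorem mem_barycentricWeights {X : ι → E} {β : E} {p : ι → ℝ} :
    p ∈ barycentricWeights X β ↔ (∀ j, 0 ≤ p j) ∧ ∑ j, p j = 1 ∧ ∑ j, p j • X j = β := by
  simp [barycentricWeights, stdSimplex, Fintype.linearCombination_apply, and_assoc]

theorem convexHull_range_eq_image_stdSimplex (X : ι → E) :
    convexHull ℝ (range X) = Fintype.linearCombination ℝ X '' stdSimplex ℝ ι := by
  classical
  rw [← convexHull_rangle_single_eq_stdSimplex, LinearMap.image_convexHull, ← range_comp]
  congr 2
  ext i
  simp [Fintype.linearCombination_apply_single]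

theorem barycentricWeights_nonempty {X : ι → E} {β : E} (hβ : β ∈ convexHull ℝ (range X)) :
    (barycentricWeights X β).Nonempty := by
  rw [convexHull_range_eq_image_stdSimplex] at hβ
  obtain ⟨p, hp, rfl⟩ := hβ
  exact ⟨p, hp, rfl⟩

theorem smul_add_smul_mem_barycentricWeights {X : ι → E} {x y : E} {p q : ι → ℝ}
    (hp : p ∈ barycentricWeights X x) (hq : q ∈ barycentricWeights X y) {a b : ℝ}
    (ha : 0 ≤ a) (hb : 0 ≤ b) (hab : a + b = 1) :
    a • p + b • q ∈ barycentricWeights X (a • x + b • y) := by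
  refine ⟨convex_stdSimplex ℝ ι hp.1 hq.1 ha hb hab, ?_⟩
  simp only [mem_preimage, map_add, map_smul, mem_singleton_iff.mp hp.2,
    mem_singleton_iff.mp hq.2, mem_singleton_iff]

theorem convex_barycentricWeights (X : ι → E) (β : E) : Convex ℝ (barycentricWeights X β) := by
  intro p hp q hq a b ha hb hab
  simpa [← add_smul, hab] using smul_add_smul_mem_barycentricWeights hp hq ha hb hab

theorem isCompact_barycentricWeights [TopologicalSpace E] [IsTopologicalAddGroup E]
    [ContinuousSMul ℝ E] [T1Space E] (X : ι → E) (β : E) :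
    IsCompact (barycentricWeights X β) :=
  (isCompact_stdSimplex ℝ ι).inter_right <|
    isClosed_singleton.preimage (LinearMap.continuous_on_pi _)

/-- An interior point of the hull is a strictly positive combination: push `β` a little away
from the centroid `c`, write the resulting point `β'` of the hull with weights `w`, and average
`w` with the uniform weights of `c`. -/
theorem exists_pos_mem_barycentricWeights [TopologicalSpace E] [IsTopologicalAddGroup E]
    [ContinuousSMul ℝ E] {X : ι → E} {β : E} (hβ : β ∈ interior (convexHull ℝ (range X))) :
    ∃ q ∈ barycentricWeights X β, ∀ j, 0 < q j := by
  have : Nonempty ι := range_nonempty_iff_nonempty.mp <|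
    convexHull_nonempty_iff.mp ⟨β, interior_subset hβ⟩
  set u : ι → ℝ := fun _ ↦ (Fintype.card ι : ℝ)⁻¹
  have hu : u ∈ barycentricWeights X (Fintype.linearCombination ℝ X u) := by
    refine ⟨⟨fun _ ↦ by positivity, ?_⟩, rfl⟩
    simp [u, Finset.card_univ, Fintype.card_ne_zero]
  set c := Fintype.linearCombination ℝ X u
  have hnear : ∀ᶠ t in 𝓝 (0 : ℝ), β + t • (β - c) ∈ convexHull ℝ (range X) :=
    (Continuous.tendsto' (by fun_prop) 0 β (by simp)).eventually
      (mem_interior_iff_mem_nhds.mp hβ)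
  obtain ⟨t, ht_mem, ht : 0 < t⟩ := ((hnear.filter_mono nhdsWithin_le_nhds).and
    (self_mem_nhdsWithin : Ioi (0 : ℝ) ∈ 𝓝[>] 0)).exists
  obtain ⟨w, hw⟩ := barycentricWeights_nonempty ht_mem
  have hcombo : (1 + t)⁻¹ • (β + t • (β - c)) + (t / (1 + t)) • c = β := by
    match_scalars <;> field_simp; ring
  refine ⟨(1 + t)⁻¹ • w + (t / (1 + t)) • u, hcombo ▸ smul_add_smul_mem_barycentricWeights hw hu
    (by positivity) (by positivity) (by field_simp), fun j ↦ ?_⟩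
  have := hw.1.1 j
  simp only [Pi.add_apply, Pi.smul_apply, smul_eq_mul, u]
  positivity

end BarycentricWeights

section Entropy

variable {m : ℕ}

theorem entropy_eq_sum_negMulLog (p : Fin m → ℝ) : entropy p = ∑ j, Real.negMulLog (p j) := by
  simp [entropy, Real.negMulLog]

theorem continuous_entropy : Continuous (entropy (m := m)) := by
  simp_rw [funext entropy_eq_sum_negMulLog]
  fun_prop

theorem strictConcaveOn_entropy : StrictConcaveOn ℝ (Ici 0) (entropy (m := m)) := by
  refine ⟨convex_Ici 0, fun p hp q hq hpq a b ha hb hab ↦ ?_⟩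
  obtain ⟨k, hk⟩ := Function.ne_iff.mp hpq
  simp only [entropy_eq_sum_negMulLog, smul_eq_mul, Finset.mul_sum, ← Finset.sum_add_distrib,
    Pi.add_apply, Pi.smul_apply]
  refine Finset.sum_lt_sum (fun j _ ↦ ?_) ⟨k, Finset.mem_univ k, ?_⟩
  · exact Real.concaveOn_negMulLog.2 (hp j) (hq j) ha.le hb.le hab
  · exact Real.strictConcaveOn_negMulLog.2 (hp k) (hq k) hk ha hb hab

/-- Concavity, sharpened by the exact value `t q_{j₀} (-log t) + t (-q_{j₀} log q_{j₀})` of the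
`j₀`-th summand, where `p` vanishes. -/
theorem le_entropy_of_apply_eq_zero {p q : Fin m → ℝ} (hp : 0 ≤ p) (hq : 0 ≤ q) {j₀ : Fin m}
    (hpj₀ : p j₀ = 0) {t : ℝ} (ht₀ : 0 ≤ t) (ht₁ : t ≤ 1) :
    (1 - t) * entropy p + t * entropy q + t * q j₀ * -Real.log t ≤
      entropy ((1 - t) • p + t • q) := by
  have hsummand : ∀ j, (1 - t) * Real.negMulLog (p j) + t * Real.negMulLog (q j) +
      (if j = j₀ then t * q j₀ * -Real.log t else 0) ≤
      Real.negMulLog ((1 - t) * p j + t * q j) := by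
    intro j
    split_ifs with hj
    · subst hj
      rw [hpj₀, mul_zero, zero_add, Real.negMulLog_zero, mul_zero, zero_add,
        Real.negMulLog_mul]
      exact le_of_eq (by simp only [Real.negMulLog]; ring)
    · simpa using Real.concaveOn_negMulLog.2 (hp j) (hq j) (by linarith) ht₀ (by ring)
  have hsum := Finset.sum_le_sum fun j (_ : j ∈ Finset.univ) ↦ hsummand j
  rw [Finset.sum_add_distrib, Finset.sum_add_distrib, Finset.sum_ite_eq',
    if_pos (Finset.mem_univ _), ← Finset.mul_sum, ← Finset.mul_sum] at hsum
  simpa only [entropy_eq_sum_negMulLog, Pi.add_apply, Pi.smul_apply, smul_eq_mul] using hsum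

theorem exists_entropy_lt_of_apply_eq_zero {p q : Fin m → ℝ} (hp : 0 ≤ p) (hq : 0 ≤ q)
    {j₀ : Fin m} (hpj₀ : p j₀ = 0) (hqj₀ : 0 < q j₀) :
    ∃ t ∈ Ioo (0 : ℝ) 1, entropy p < entropy ((1 - t) • p + t • q) := by
  obtain ⟨t, ⟨ht₀, ht₁⟩, hlog⟩ := (Filter.Eventually.and (Ioo_mem_nhdsGT one_pos)
    (Real.tendsto_log_nhdsGT_zero.eventually_lt_atBot
      (-((entropy p - entropy q) / q j₀)))).exists
  have hgain : entropy p - entropy q < q j₀ * -Real.log t := by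
    rw [← div_lt_iff₀' hqj₀]
    linarith
  refine ⟨t, ⟨ht₀, ht₁⟩, lt_of_lt_of_le ?_ (le_entropy_of_apply_eq_zero hp hq hpj₀ ht₀.le ht₁.le)⟩
  nlinarith

end Entropy

theorem stmt10_general {d m : ℕ} (X : Fin m → Euc d)
    (β : Euc d) (hβ : β ∈ interior (convexHull ℝ (Set.range X))) :
    ∃ pstar : Fin m → ℝ,
      (∀ j, 0 < pstar j) ∧ ∑ j, pstar j = 1 ∧ ∑ j, pstar j • X j = β ∧
      (∀ p : Fin m → ℝ, (∀ j, 0 ≤ p j) → ∑ j, p j = 1 → ∑ j, p j • X j = β →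
        entropy p ≤ entropy pstar) ∧
      (∀ p : Fin m → ℝ, (∀ j, 0 ≤ p j) → ∑ j, p j = 1 → ∑ j, p j • X j = β →
        entropy p = entropy pstar → p = pstar) := by
  set S := barycentricWeights X β
  have hS_nonneg : S ⊆ Ici 0 := fun p hp ↦ hp.1.1
  obtain ⟨pstar, hpstar, hmax⟩ := (isCompact_barycentricWeights X β).exists_isMaxOn
    (barycentricWeights_nonempty (interior_subset hβ)) continuous_entropy.continuousOn
  obtain ⟨q, hq, hq_pos⟩ := exists_pos_mem_barycentricWeights hβ
  have hpos : ∀ j, 0 < pstar j := by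
    by_contra! ⟨j₀, hj₀⟩
    obtain ⟨t, ht, hlt⟩ := exists_entropy_lt_of_apply_eq_zero (hS_nonneg hpstar) (hS_nonneg hq)
      (le_antisymm hj₀ (hpstar.1.1 j₀)) (hq_pos j₀)
    exact hlt.not_ge <| hmax <| convex_barycentricWeights X β hpstar hq
      (by linarith [ht.2]) ht.1.le (by ring)
  obtain ⟨-, hpstar_sum, hpstar_bary⟩ := mem_barycentricWeights.mp hpstar
  refine ⟨pstar, hpos, hpstar_sum, hpstar_bary,
    fun p h₀ h₁ hbary ↦ hmax (mem_barycentricWeights.mpr ⟨h₀, h₁, hbary⟩), ?_⟩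
  intro p h₀ h₁ hbary heq
  have hp : p ∈ S := mem_barycentricWeights.mpr ⟨h₀, h₁, hbary⟩
  exact (strictConcaveOn_entropy.subset hS_nonneg (convex_barycentricWeights X β)).eq_of_isMaxOn
    (fun r hr ↦ heq ▸ hmax hr) hmax hp hpstar

/-- If the differences `X_i - X_j` span `ℝ^d` and `β` is interior to the convex hull
of the `X_j`, then under the constraints `∑ p_j = 1`, `∑ p_j X_j = β`, the entropy
attains its maximum at a strictly positive point, and the maximal point is unique. -/
theorem stmt10 {d m : ℕ} (hm : 2 ≤ m) (X : Fin m → Euc d)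
    (hspan : Submodule.span ℝ {v : Euc d | ∃ i j, v = X i - X j} = ⊤)
    (β : Euc d) (hβ : β ∈ interior (convexHull ℝ (Set.range X))) :
    ∃ pstar : Fin m → ℝ,
      (∀ j, 0 < pstar j) ∧ ∑ j, pstar j = 1 ∧ ∑ j, pstar j • X j = β ∧
      (∀ p : Fin m → ℝ, (∀ j, 0 ≤ p j) → ∑ j, p j = 1 → ∑ j, p j • X j = β →
        entropy p ≤ entropy pstar) ∧
      (∀ p : Fin m → ℝ, (∀ j, 0 ≤ p j) → ∑ j, p j = 1 → ∑ j, p j • X j = β →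
        entropy p = entropy pstar → p = pstar) :=
  stmt10_general X β hβ
end
end

section
/- Suppose the differences {X_i − X_j : 1 ≤ i, j ≤ m} span ℝ^d. For t ∈ ℝ^d let p(t) be the probability vector with p(t)_j = e^{⟨t, X_j⟩}/Z(t), let G(t) = diag(p(t)) − p(t)·p(t)^T (an m×m matrix), and let M be the d×m matrix with columns X₁,…,X_m. Then for every t ∈ ℝ^d the d×d matrix M·G(t)·M^T is non-singular; equivalently, x·M·G(t)·M^T·x^T > 0 for every non-zero x ∈ ℝ^d. -/
open scoped BigOperators RealInnerProductSpace
open Filter Topology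

noncomputable section

/-!
For a probability vector `p`, the quadratic form of `diag(p) - p pᵀ` at `y` is the variance
`∑ pⱼ (yⱼ - ⟨p, y⟩)²` of `y` under `p`. Hence `x ⬝ M G(t) Mᵀ x` is the variance of `j ↦ ⟨x, X_j⟩`
under the Gibbs distribution `p(t)`, which has full support; it vanishes only if `⟨x, X_j⟩` does
not depend on `j`, i.e. if `x` is orthogonal to all the differences `X_i - X_j`, which span `ℝ^d`.
-/

open scoped Matrix

theorem sum_mul_sq_sub_pos {ι : Type*} [Fintype ι] {p y : ι → ℝ} (hp : ∀ k, 0 < p k)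
    {i j : ι} (hij : y i ≠ y j) (c : ℝ) : 0 < ∑ k, p k * (y k - c) ^ 2 := by
  obtain ⟨k, hk⟩ : ∃ k, y k ≠ c := by
    by_contra! h
    exact hij ((h i).trans (h j).symm)
  exact Finset.sum_pos' (fun k _ => mul_nonneg (hp k).le (sq_nonneg _))
    ⟨k, Finset.mem_univ k, mul_pos (hp k) (sq_pos_of_ne_zero (sub_ne_zero.mpr hk))⟩

namespace Matrix

variable {l n R : Type*} [Fintype l] [Fintype n]

theorem dotProduct_mul_mul_transpose_mulVec [CommSemiring R] (B : Matrix l n R)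
    (A : Matrix n n R) (x : l → R) :
    x ⬝ᵥ (B * A * Bᵀ) *ᵥ x = (Bᵀ *ᵥ x) ⬝ᵥ A *ᵥ (Bᵀ *ᵥ x) := by
  rw [← mulVec_mulVec, ← mulVec_mulVec, dotProduct_mulVec, ← mulVec_transpose]

theorem det_ne_zero_of_dotProduct_mulVec_pos [DecidableEq n] [Field R] [LinearOrder R]
    [IsStrictOrderedRing R] {A : Matrix n n R} (hA : ∀ x, x ≠ 0 → 0 < x ⬝ᵥ A *ᵥ x) :
    A.det ≠ 0 := by
  intro hdet
  obtain ⟨v, hv, hAv⟩ := exists_mulVec_eq_zero_iff.mpr hdet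
  simpa [hAv] using hA v hv

theorem dotProduct_diagonal_sub_vecMulVec_mulVec [DecidableEq n] [CommRing R] {p : n → R}
    (hp : ∑ i, p i = 1) (y : n → R) :
    y ⬝ᵥ (diagonal p - vecMulVec p p) *ᵥ y = ∑ i, p i * (y i - p ⬝ᵥ y) ^ 2 := by
  have hdiag : y ⬝ᵥ diagonal p *ᵥ y = ∑ i, p i * y i ^ 2 := by
    simp only [mulVec_diagonal, dotProduct]
    exact Finset.sum_congr rfl fun i _ => by ring
  have hrank_one : y ⬝ᵥ vecMulVec p p *ᵥ y = (p ⬝ᵥ y) ^ 2 := by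
    rw [vecMulVec_mulVec, op_smul_eq_smul, dotProduct_smul, smul_eq_mul, dotProduct_comm]
    ring
  have hexpand : ∀ i, p i * (y i - p ⬝ᵥ y) ^ 2
      = p i * y i ^ 2 - 2 * (p ⬝ᵥ y) * (p i * y i) + (p ⬝ᵥ y) ^ 2 * p i := fun i => by ring
  have hmean : ∑ i, p i * y i = p ⬝ᵥ y := rfl
  simp only [sub_mulVec, dotProduct_sub, hdiag, hrank_one, hexpand, Finset.sum_add_distrib,
    Finset.sum_sub_distrib, ← Finset.mul_sum, hp, hmean]
  ring

theorem dotProduct_diagonal_sub_vecMulVec_mulVec_pos [DecidableEq n] {p y : n → ℝ}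
    (hp : ∀ k, 0 < p k) (hsum : ∑ k, p k = 1) {i j : n} (hij : y i ≠ y j) :
    0 < y ⬝ᵥ (diagonal p - vecMulVec p p) *ᵥ y := by
  rw [dotProduct_diagonal_sub_vecMulVec_mulVec hsum]
  exact sum_mul_sq_sub_pos hp hij _

end Matrix

theorem exp_div_sum_exp_pos {ι : Type*} [Fintype ι] [Nonempty ι] (f : ι → ℝ) (j : ι) :
    0 < Real.exp (f j) / ∑ i, Real.exp (f i) := by
  positivity

theorem sum_exp_div_sum_exp {ι : Type*} [Fintype ι] [Nonempty ι] (f : ι → ℝ) :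
    ∑ j, Real.exp (f j) / ∑ i, Real.exp (f i) = 1 := by
  rw [← Finset.sum_div, div_self (by positivity)]

theorem exists_inner_ne_of_span_sub_eq_top {E ι : Type*} [NormedAddCommGroup E]
    [InnerProductSpace ℝ E] {X : ι → E}
    (hspan : Submodule.span ℝ {v : E | ∃ i j, v = X i - X j} = ⊤) {x : E} (hx : x ≠ 0) :
    ∃ i j, ⟪x, X i⟫ ≠ ⟪x, X j⟫ := by
  by_contra! h
  have hle : Submodule.span ℝ {v : E | ∃ i j, v = X i - X j} ≤ LinearMap.ker (innerₛₗ ℝ x) := by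
    rw [Submodule.span_le]
    rintro _ ⟨i, j, rfl⟩
    simp [inner_sub_right, h i j]
  rw [hspan, top_le_iff, LinearMap.ker_eq_top] at hle
  exact hx (inner_self_eq_zero.mp (LinearMap.congr_fun hle x))

theorem transpose_of_mulVec_apply {ι κ : Type*} [Fintype κ] (X : ι → EuclideanSpace ℝ κ)
    (x : κ → ℝ) (j : ι) :
    ((Matrix.of fun i j => X j i)ᵀ *ᵥ x) j = ⟪WithLp.toLp 2 x, X j⟫ := by
  simp [Matrix.mulVec, dotProduct, PiLp.inner_apply]

theorem stmt11_general {d m : ℕ} (X : Fin m → Euc d)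
    (hspan : Submodule.span ℝ {v : Euc d | ∃ i j, v = X i - X j} = ⊤)
    (t : Euc d) :
    let p : Fin m → ℝ := fun j => Real.exp ⟪t, X j⟫ / ∑ i, Real.exp ⟪t, X i⟫
    let G : Matrix (Fin m) (Fin m) ℝ :=
      Matrix.diagonal p - Matrix.of (fun i j => p i * p j)
    let M : Matrix (Fin d) (Fin m) ℝ := Matrix.of (fun i j => X j i)
    (M * G * M.transpose).det ≠ 0 ∧
    ∀ x : Fin d → ℝ, x ≠ 0 → 0 < dotProduct x ((M * G * M.transpose).mulVec x) := by
  intro p G M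
  have hquad : ∀ x : Fin d → ℝ, x ≠ 0 → 0 < x ⬝ᵥ (M * G * Mᵀ) *ᵥ x := by
    intro x hx
    obtain ⟨i, j, hij⟩ := exists_inner_ne_of_span_sub_eq_top hspan (x := WithLp.toLp 2 x)
      (by simpa using hx)
    have : Nonempty (Fin m) := ⟨i⟩
    rw [Matrix.dotProduct_mul_mul_transpose_mulVec]
    refine Matrix.dotProduct_diagonal_sub_vecMulVec_mulVec_pos
      (exp_div_sum_exp_pos _) (sum_exp_div_sum_exp _) (i := i) (j := j) ?_
    simpa only [M, transpose_of_mulVec_apply] using hij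
  exact ⟨Matrix.det_ne_zero_of_dotProduct_mulVec_pos hquad, hquad⟩

/-- If the differences `X_i - X_j` span `ℝ^d`, then for every `t ∈ ℝ^d` the matrix
`M G(t) Mᵀ` is non-singular, where `G(t) = diag(p(t)) - p(t) p(t)ᵀ` with
`p(t)_j = e^{⟨t,X_j⟩}/Z(t)` and `M` has columns `X₁,…,X_m`; equivalently the
associated quadratic form is positive definite. -/
theorem stmt11 {d m : ℕ} (hm : 2 ≤ m) (X : Fin m → Euc d)
    (hspan : Submodule.span ℝ {v : Euc d | ∃ i j, v = X i - X j} = ⊤)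
    (t : Euc d) :
    let p : Fin m → ℝ := fun j => Real.exp ⟪t, X j⟫ / ∑ i, Real.exp ⟪t, X i⟫
    let G : Matrix (Fin m) (Fin m) ℝ :=
      Matrix.diagonal p - Matrix.of (fun i j => p i * p j)
    let M : Matrix (Fin d) (Fin m) ℝ := Matrix.of (fun i j => X j i)
    (M * G * M.transpose).det ≠ 0 ∧
    ∀ x : Fin d → ℝ, x ≠ 0 → 0 < dotProduct x ((M * G * M.transpose).mulVec x) :=
  stmt11_general X hspan t
end
end

section
/- Suppose X₁,…,X_m are η-coplanar. Then the maximum over unit vectors θ ∈ C_X of γ(θ)/⟨η, θ⟩ equals log m, and it is attained at θ₀ = (Σ_{j=1}^m X_j)/‖Σ_{j=1}^m X_j‖. -/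
/-!
Coplanarity forces every word summing to `z` to have length `⟪η, z⟫`, so there are at most
`m ^ ⟪η, z⟫` of them, and since semigroup points lie within bounded distance of `k θ`, this gives
`γ(θ) ≤ ⟪η, θ⟫ log m` for every direction `θ`. The bound is attained at `θ₀`: the semigroup point
`n ∑ X j` is the sum of at least `m ^ (n m) / (n + 1) ^ (m m)` words of length `n m`.
-/

open scoped BigOperators RealInnerProductSpace
open Filter Topology

noncomputable section

open Finset

section IntegerVectors

variable {s : ℕ} {v : Euc s}

lemma exists_int_eq_norm_sq (hv : ∀ i, ∃ a : ℤ, v i = a) : ∃ A : ℤ, ‖v‖ ^ 2 = A := by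
  choose a ha using hv
  exact ⟨∑ i, a i ^ 2, by simp [EuclideanSpace.real_norm_sq_eq, ha]⟩

lemma one_le_norm_of_int_coords (hv : ∀ i, ∃ a : ℤ, v i = a) (h0 : v ≠ 0) : 1 ≤ ‖v‖ := by
  obtain ⟨A, hA⟩ := exists_int_eq_norm_sq hv
  have hA0 : (0 : ℝ) < A := hA ▸ pow_pos (norm_pos_iff.2 h0) 2
  refine (one_le_sq_iff₀ (norm_nonneg v)).1 ?_
  rw [hA]
  exact_mod_cast (show (0 : ℤ) < A by exact_mod_cast hA0)

/-- `t` is not a half-integer, as `(k + 1/2) ^ 2 = (4 k ^ 2 + 4 k + 1) / 4` is never an integer. -/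
lemma exists_nat_abs_sub_lt_half {t : ℝ} (ht : 0 ≤ t) {A : ℤ} (hA : t ^ 2 = A) :
    ∃ k : ℕ, |(k : ℝ) - t| < 1 / 2 := by
  set K := ⌊t⌋₊
  have hK : (K : ℝ) ≤ t ∧ t < K + 1 := ⟨Nat.floor_le ht, Nat.lt_floor_add_one t⟩
  have hne : t ≠ K + 1 / 2 := by
    intro htK
    have : (4 * A : ℝ) = 4 * K ^ 2 + 4 * K + 1 := by rw [← hA, htK]; ring
    have : 4 * A = 4 * (K : ℤ) ^ 2 + 4 * K + 1 := by exact_mod_cast this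
    omega
  rcases hne.lt_or_gt with h | h
  · exact ⟨K, by rw [abs_sub_lt_iff]; constructor <;> linarith⟩
  · exact ⟨K + 1, by rw [abs_sub_lt_iff]; push_cast; constructor <;> linarith⟩

end IntegerVectors

lemma log_natCast_le_mul_log_of_le_pow {a b N : ℕ} (h : a ≤ b ^ N) :
    Real.log a ≤ N * Real.log b := by
  rcases a.eq_zero_or_pos with rfl | ha
  · simpa using mul_nonneg (Nat.cast_nonneg N) (Real.log_natCast_nonneg b)
  · rw [← Real.log_pow]
    exact Real.log_le_log (by exact_mod_cast ha) (by exact_mod_cast h)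

lemma tendsto_comp_div_of_abs_sub_le {f : ℕ → ℝ} {L c b : ℝ} (hc : 0 < c)
    (hf : Tendsto (fun k : ℕ => f k / k) atTop (𝓝 L)) {σ : ℕ → ℕ}
    (hσ : ∀ n, |(σ n : ℝ) - c * n| ≤ b) :
    Tendsto (fun n : ℕ => f (σ n) / n) atTop (𝓝 (c * L)) := by
  have hσ_top : Tendsto σ atTop atTop := by
    refine tendsto_natCast_atTop_iff.1 (tendsto_atTop_mono (fun n => ?_)
      (tendsto_atTop_add_const_right _ (-b) (tendsto_natCast_atTop_atTop.const_mul_atTop hc)))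
    linarith [(abs_le.1 (hσ n)).1]
  have hratio : Tendsto (fun n : ℕ => (σ n : ℝ) / n) atTop (𝓝 c) := by
    have herr : Tendsto (fun n : ℕ => ((σ n : ℝ) - c * n) / n) atTop (𝓝 0) :=
      squeeze_zero_norm (fun n => by
        rw [norm_div, Real.norm_eq_abs, Real.norm_natCast]
        exact div_le_div_of_nonneg_right (hσ n) (Nat.cast_nonneg n))
        (tendsto_const_div_atTop_nhds_zero_nat b)
    refine (by simpa using tendsto_const_nhds.add herr : Tendsto _ _ (𝓝 c)).congr' ?_
    filter_upwards [eventually_gt_atTop 0] with n hn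
    field_simp
    ring
  refine (mul_comm L c ▸ (hf.comp hσ_top).mul hratio).congr' ?_
  filter_upwards [hσ_top.eventually_gt_atTop 0] with n hn
  exact div_mul_div_cancel₀ (by exact_mod_cast hn.ne')

lemma tendsto_log_add_one_div_nat : Tendsto (fun n : ℕ => Real.log (n + 1) / n) atTop (𝓝 0) :=
  ((Real.tendsto_pow_log_div_mul_add_atTop 1 (-1) 1 one_ne_zero).comp
    (tendsto_atTop_add_const_right _ 1 tendsto_natCast_atTop_atTop)).congr fun n => by simp

section Semigroup

variable {s : ℕ} {ι : Type*} [Fintype ι] {X : ι → Euc s}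

lemma IntegralVecs.int_coords_of_mem_sgOf (hX : IntegralVecs X) {z : Euc s}
    (hz : z ∈ sgOf X) (i : Fin s) : ∃ a : ℤ, z i = a := by
  obtain ⟨u, rfl⟩ := hz
  choose A hA using hX
  exact ⟨∑ j, u j * A j i, by simp [hA]⟩

lemma IntegralVecs.one_le_dist_of_mem_sgOf (hX : IntegralVecs X) {z z' : Euc s}
    (hz : z ∈ sgOf X) (hz' : z' ∈ sgOf X) (hne : z ≠ z') : 1 ≤ dist z z' := by
  rw [dist_eq_norm]
  refine one_le_norm_of_int_coords (fun i => ?_) (sub_ne_zero.2 hne)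
  obtain ⟨a, ha⟩ := hX.int_coords_of_mem_sgOf hz i
  obtain ⟨b, hb⟩ := hX.int_coords_of_mem_sgOf hz' i
  exact ⟨a - b, by simp [ha, hb]⟩

lemma IntegralVecs.exists_mem_sgOf_infDist_eq (hX : IntegralVecs X) (x : Euc s) :
    ∃ z ∈ sgOf X, Metric.infDist x (sgOf X) = dist x z :=
  (Metric.isClosed_of_pairwise_le_dist one_pos fun _ hz _ hz' hne =>
    hX.one_le_dist_of_mem_sgOf hz hz' hne).exists_infDist_eq_dist ⟨0, 0, by simp⟩ x

lemma IntegralVecs.multC_le_mult (hX : IntegralVecs X) (x : Euc s) :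
    ∃ z ∈ sgOf X, dist x z = Metric.infDist x (sgOf X) ∧ multC X x ≤ mult X z := by
  obtain ⟨z, hz, hd⟩ := hX.exists_mem_sgOf_infDist_eq x
  exact ⟨z, hz, hd.symm, Nat.sInf_le ⟨z, hz, hd.symm, rfl⟩⟩

/-- Points of the semigroup are `1`-separated, so a point at distance `< 1/2` from `z`
has `z` as its unique nearest point. -/
lemma IntegralVecs.multC_eq_mult_of_dist_lt (hX : IntegralVecs X) {x z : Euc s}
    (hz : z ∈ sgOf X) (hx : dist x z < 1 / 2) : multC X x = mult X z := by
  have hnearest : ∀ z' ∈ sgOf X, dist x z' = Metric.infDist x (sgOf X) → z' = z := by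
    intro z' hz' hd
    by_contra hne
    have h1 := hX.one_le_dist_of_mem_sgOf hz' hz hne
    have h2 : dist x z' ≤ dist x z := hd.trans_le (Metric.infDist_le_dist_of_mem hz)
    linarith [dist_triangle_left z' z x]
  have hinf : Metric.infDist x (sgOf X) = dist x z := by
    obtain ⟨z', hz', hd⟩ := hX.exists_mem_sgOf_infDist_eq x
    rwa [hnearest z' hz' hd.symm] at hd
  have hset : {n | ∃ z' ∈ sgOf X, dist x z' = Metric.infDist x (sgOf X) ∧ mult X z' = n}
      = {mult X z} := by
    ext n
    constructor
    · rintro ⟨z', hz', hd, rfl⟩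
      rw [hnearest z' hz' hd, Set.mem_singleton_iff]
    · rintro rfl
      exact ⟨z, hz, hinf.symm, rfl⟩
  rw [multC, hset, csInf_singleton]

lemma infDist_sgOf_le_of_mem_coneOf {x : Euc s} (hx : x ∈ coneOf X) :
    Metric.infDist x (sgOf X) ≤ ∑ j, ‖X j‖ := by
  obtain ⟨c, hc, rfl⟩ := hx
  have hz : ∑ j, (⌊c j⌋₊ : ℝ) • X j ∈ sgOf X := ⟨fun j => ⌊c j⌋₊, rfl⟩
  refine (Metric.infDist_le_dist_of_mem hz).trans ?_
  rw [dist_eq_norm, ← Finset.sum_sub_distrib]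
  refine (norm_sum_le _ _).trans (Finset.sum_le_sum fun j _ => ?_)
  rw [← sub_smul, norm_smul, Real.norm_of_nonneg (sub_nonneg.2 (Nat.floor_le (hc j)))]
  have := Nat.lt_floor_add_one (c j)
  exact mul_le_of_le_one_left (norm_nonneg _) (by linarith)

lemma smul_mem_coneOf {x : Euc s} (hx : x ∈ coneOf X) {r : ℝ} (hr : 0 ≤ r) : r • x ∈ coneOf X := by
  obtain ⟨c, hc, rfl⟩ := hx
  exact ⟨fun j => r * c j, fun j => mul_nonneg hr (hc j), by simp [Finset.smul_sum, mul_smul]⟩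

end Semigroup

section Coplanar

variable {s : ℕ} {η : Euc s} {ι : Type*} {X : ι → Euc s}

lemma inner_sum_map_of_coplanar (hη : ∀ j, ⟪η, X j⟫ = 1) (w : List ι) :
    ⟪η, (w.map X).sum⟫ = w.length := by
  induction w with
  | nil => simp
  | cons a w ih => simp [inner_add_right, ih, hη a, add_comm]

variable [Fintype ι]

lemma inner_sum_smul_of_coplanar (hη : ∀ j, ⟪η, X j⟫ = 1) (c : ι → ℝ) :
    ⟪η, ∑ j, c j • X j⟫ = ∑ j, c j := by
  simp [inner_sum, real_inner_smul_right, hη]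

lemma inner_sum_of_coplanar (hη : ∀ j, ⟪η, X j⟫ = 1) : ⟪η, ∑ j, X j⟫ = Fintype.card ι := by
  simp [inner_sum, hη]

lemma sum_ne_zero_of_coplanar [Nonempty ι] (hη : ∀ j, ⟪η, X j⟫ = 1) : ∑ j, X j ≠ 0 := fun h => by
  have := inner_sum_of_coplanar hη
  rw [h, inner_zero_right] at this
  exact Fintype.card_ne_zero (by exact_mod_cast this.symm)

lemma inner_pos_of_mem_coneOf (hη : ∀ j, ⟪η, X j⟫ = 1) {x : Euc s} (hx : x ∈ coneOf X)
    (hx0 : x ≠ 0) : 0 < ⟪η, x⟫ := by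
  obtain ⟨c, hc, rfl⟩ := hx
  rw [inner_sum_smul_of_coplanar hη]
  refine (sum_nonneg fun j _ => hc j).lt_of_ne fun h => hx0 ?_
  rw [eq_comm, sum_eq_zero_iff_of_nonneg fun j _ => hc j] at h
  simp [h]

end Coplanar

section Multiplicity

variable {s m : ℕ} {X : Fin m → Euc s} {η : Euc s}

lemma sum_map_ofFn_eq_iter {N : ℕ} (ω : Fin N → Fin m) :
    ((List.ofFn ω).map X).sum = iter X N ω := by
  simp [iter, List.sum_ofFn]

lemma mult_eq_card_iter (hη : ∀ j, ⟪η, X j⟫ = 1) {z : Euc s} {N : ℕ} (hN : ⟪η, z⟫ = N) :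
    mult X z = #{ω : Fin N → Fin m | iter X N ω = z} := by
  have hwords : {w : List (Fin m) | (w.map X).sum = z} =
      List.ofFn '' {ω : Fin N → Fin m | iter X N ω = z} := by
    ext w
    simp only [Set.mem_ofPred_eq, Set.mem_image]
    constructor
    · rintro rfl
      have hlen : w.length = N := by
        exact_mod_cast (inner_sum_map_of_coplanar hη w).symm.trans hN
      subst hlen
      exact ⟨w.get, by rw [← sum_map_ofFn_eq_iter, List.ofFn_get], List.ofFn_get w⟩
    · rintro ⟨ω, rfl, rfl⟩
      exact sum_map_ofFn_eq_iter ω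
  rw [mult, hwords, Set.ncard_image_of_injective _ List.ofFn_injective, ← Set.ncard_coe_finset]
  simp

lemma mult_le_pow (hη : ∀ j, ⟪η, X j⟫ = 1) {z : Euc s} {N : ℕ} (hN : ⟪η, z⟫ = N) :
    mult X z ≤ m ^ N := by
  rw [mult_eq_card_iter hη hN]
  exact (card_filter_le _ _).trans (by simp)

lemma log_multC_le (hX : IntegralVecs X) (hη : ∀ j, ⟪η, X j⟫ = 1) {x : Euc s}
    (hx : x ∈ coneOf X) :
    Real.log (multC X x) ≤ (⟪η, x⟫ + ‖η‖ * ∑ j, ‖X j‖) * Real.log m := by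
  obtain ⟨z, ⟨u, rfl⟩, hd, hle⟩ := hX.multC_le_mult x
  have hN : ⟪η, ∑ j, (u j : ℝ) • X j⟫ = (∑ j, u j : ℕ) := by
    rw [inner_sum_smul_of_coplanar hη]; push_cast; rfl
  have hNx : ((∑ j, u j : ℕ) : ℝ) ≤ ⟪η, x⟫ + ‖η‖ * ∑ j, ‖X j‖ := by
    calc ((∑ j, u j : ℕ) : ℝ) = ⟪η, x⟫ + ⟪η, ∑ j, (u j : ℝ) • X j - x⟫ := by
          rw [inner_sub_right, hN]; ring
      _ ≤ ⟪η, x⟫ + ‖η‖ * ‖∑ j, (u j : ℝ) • X j - x‖ := by gcongr; exact real_inner_le_norm _ _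
      _ ≤ ⟪η, x⟫ + ‖η‖ * ∑ j, ‖X j‖ := by
          rw [← dist_eq_norm, dist_comm, hd]
          gcongr
          exact infDist_sgOf_le_of_mem_coneOf hx
  calc Real.log (multC X x) ≤ (∑ j, u j : ℕ) * Real.log m :=
        log_natCast_le_mul_log_of_le_pow (hle.trans (mult_le_pow hη hN))
    _ ≤ _ := mul_le_mul_of_nonneg_right hNx (Real.log_natCast_nonneg m)

lemma le_inner_mul_log_of_tendsto (hX : IntegralVecs X) (hη : ∀ j, ⟪η, X j⟫ = 1) {θ : Euc s}
    (hθ : θ ∈ coneOf X) {L : ℝ}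
    (hL : Tendsto (fun k : ℕ => Real.log (multC X ((k : ℝ) • θ)) / k) atTop (𝓝 L)) :
    L ≤ ⟪η, θ⟫ * Real.log m := by
  set B := ‖η‖ * (∑ j, ‖X j‖) * Real.log m
  have hbound : ∀ᶠ k : ℕ in atTop,
      Real.log (multC X ((k : ℝ) • θ)) / k ≤ ⟪η, θ⟫ * Real.log m + B / k := by
    filter_upwards [eventually_gt_atTop 0] with k hk
    have hk : (0 : ℝ) < k := by exact_mod_cast hk
    rw [div_le_iff₀ hk]
    calc Real.log (multC X ((k : ℝ) • θ))
        ≤ (⟪η, (k : ℝ) • θ⟫ + ‖η‖ * ∑ j, ‖X j‖) * Real.log m :=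
          log_multC_le hX hη (smul_mem_coneOf hθ hk.le)
      _ = (⟪η, θ⟫ * Real.log m + B / k) * k := by
          rw [real_inner_smul_right]; field_simp; ring
  have hlim : Tendsto (fun k : ℕ => ⟪η, θ⟫ * Real.log m + B / k) atTop
      (𝓝 (⟪η, θ⟫ * Real.log m)) := by
    simpa using tendsto_const_nhds.add (tendsto_const_div_atTop_nhds_zero_nat B)
  exact le_of_tendsto_of_tendsto hL hlim hbound

end Multiplicity

section Words

variable {m n : ℕ}

def letterCount (ω : Fin n → Fin m) (j : Fin m) : ℕ := #{i | ω i = j}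

lemma sum_letterCount (ω : Fin n → Fin m) : ∑ j, letterCount ω j = n := by
  simpa [letterCount] using (card_eq_sum_card_fiberwise (f := ω) (s := univ) (t := univ)
    fun i _ => mem_univ _).symm

lemma iter_eq_sum_letterCount {s : ℕ} (X : Fin m → Euc s) (ω : Fin n → Fin m) :
    iter X n ω = ∑ j, (letterCount ω j : ℝ) • X j := by
  rw [iter, ← sum_fiberwise univ ω fun i => X (ω i)]
  refine sum_congr rfl fun j _ => ?_
  rw [sum_congr rfl fun i hi => congrArg X (mem_filter.1 hi).2, sum_const, letterCount,
    Nat.cast_smul_eq_nsmul]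

lemma letterCount_perm_comp (π : Equiv.Perm (Fin m)) (ω : Fin n → Fin m) (j : Fin m) :
    letterCount (π ∘ ω) j = letterCount ω (π.symm j) := by
  simp [letterCount, ← Equiv.eq_symm_apply]

lemma card_letterCount_eq_comp_perm (u : Fin m → ℕ) (π : Equiv.Perm (Fin m)) :
    #{ω : Fin n → Fin m | letterCount ω = u ∘ π} = #{ω : Fin n → Fin m | letterCount ω = u} := by
  refine card_nbij' (π ∘ ·) (π.symm ∘ ·) ?_ ?_ ?_ ?_ <;> intro ω hω
  all_goals simp_all [funext_iff, letterCount_perm_comp, ← Function.comp_assoc]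

lemma exists_pow_le_card_letterCount_eq (m n : ℕ) :
    ∃ u : Fin m → ℕ, (m : ℝ) ^ n ≤ (n + 1) ^ m * #{ω : Fin n → Fin m | letterCount ω = u} := by
  have hmaps : ∀ ω ∈ (univ : Finset (Fin n → Fin m)),
      letterCount ω ∈ Fintype.piFinset fun _ => range (n + 1) := by
    intro ω _
    simp only [Fintype.mem_piFinset, mem_range, Nat.lt_succ_iff]
    exact fun j => (card_filter_le _ _).trans (by simp)
  obtain ⟨u, -, hu⟩ := exists_le_card_fiber_of_nsmul_le_card_of_maps_to hmaps
    ⟨0, by simp⟩ (b := (m : ℝ) ^ n / (n + 1) ^ m)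
    (by simp [Fintype.card_piFinset, mul_div_cancel₀ _ (by positivity : ((n : ℝ) + 1) ^ m ≠ 0)])
  exact ⟨u, by rwa [div_le_iff₀' (by positivity)] at hu⟩

def concatWords (k : ℕ) : (Fin k → Fin n → Fin m) ≃ (Fin (k * n) → Fin m) :=
  (Equiv.curry _ _ _).symm.trans (finProdFinEquiv.arrowCongr (Equiv.refl _))

lemma iter_concatWords {s k : ℕ} (X : Fin m → Euc s) (W : Fin k → Fin n → Fin m) :
    iter X (k * n) (concatWords k W) = ∑ t, iter X n (W t) := by
  simp only [iter, concatWords, Equiv.trans_apply, Equiv.arrowCongr_apply, Equiv.coe_refl]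
  exact (Equiv.sum_comp finProdFinEquiv.symm fun q => X (Function.uncurry W q)).trans
    (Fintype.sum_prod_type _)

end Words

section LowerBound

variable {s m : ℕ} {X : Fin m → Euc s} {η : Euc s}

/-- Concatenating `m` words whose letter counts are the cyclic shifts `u (· + t)` of `u` gives a
word in which every letter occurs exactly `∑ u = n` times, i.e. a word summing to `n • ∑ X j`. -/
lemma card_letterCount_eq_pow_le_mult [NeZero m] (hη : ∀ j, ⟪η, X j⟫ = 1) {n : ℕ}
    (u : Fin m → ℕ) :
    #{ω : Fin n → Fin m | letterCount ω = u} ^ m ≤ mult X ((n : ℝ) • ∑ j, X j) := by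
  set F : Fin m → Finset (Fin n → Fin m) := fun t => {ω | letterCount ω = u ∘ Equiv.addRight t}
  have hN : ⟪η, (n : ℝ) • ∑ j, X j⟫ = (m * n : ℕ) := by
    rw [real_inner_smul_right, inner_sum_of_coplanar hη, Fintype.card_fin]
    push_cast
    ring
  rw [mult_eq_card_iter hη hN]
  calc #{ω : Fin n → Fin m | letterCount ω = u} ^ m
      = #(Fintype.piFinset F) := by
        rw [Fintype.card_piFinset]
        simp only [F, card_letterCount_eq_comp_perm, prod_const, card_univ, Fintype.card_fin]
    _ = #((Fintype.piFinset F).map (concatWords m).toEmbedding) := (card_map _).symm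
    _ ≤ _ := by
        refine card_le_card fun ω hω => ?_
        obtain ⟨W, hW, rfl⟩ := mem_map.1 hω
        have hW : ∀ t, letterCount (W t) = u ∘ Equiv.addRight t :=
          fun t => (mem_filter.1 (Fintype.mem_piFinset.1 hW t)).2
        have hu : ∑ j, u j = n := by simpa [hW 0] using sum_letterCount (W 0)
        refine mem_filter.2 ⟨mem_univ _, ?_⟩
        rw [Equiv.coe_toEmbedding, iter_concatWords]
        simp only [iter_eq_sum_letterCount, hW]
        rw [sum_comm, smul_sum]
        refine sum_congr rfl fun j _ => ?_
        rw [← sum_smul, ← hu]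
        push_cast
        congr 1
        exact Fintype.sum_equiv (Equiv.addLeft j) _ _ fun _ => rfl

lemma le_log_mult_smul_sum [NeZero m] (hη : ∀ j, ⟪η, X j⟫ = 1) (n : ℕ) :
    n * m * Real.log m - m * m * Real.log (n + 1) ≤ Real.log (mult X ((n : ℝ) • ∑ j, X j)) := by
  obtain ⟨u, hu⟩ := exists_pow_le_card_letterCount_eq m n
  have hpow : (m : ℝ) ^ (n * m) ≤ ((n : ℝ) + 1) ^ (m * m) * mult X ((n : ℝ) • ∑ j, X j) :=
    calc (m : ℝ) ^ (n * m) = ((m : ℝ) ^ n) ^ m := pow_mul _ _ _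
      _ ≤ (((n : ℝ) + 1) ^ m * #{ω : Fin n → Fin m | letterCount ω = u}) ^ m := by gcongr
      _ = ((n : ℝ) + 1) ^ (m * m) * (#{ω : Fin n → Fin m | letterCount ω = u} ^ m : ℕ) := by
          push_cast; rw [mul_pow, pow_mul]
      _ ≤ ((n : ℝ) + 1) ^ (m * m) * mult X ((n : ℝ) • ∑ j, X j) := by
          gcongr; exact_mod_cast card_letterCount_eq_pow_le_mult hη u
  have hm : (0 : ℝ) < m ^ (n * m) := pow_pos (by simp [NeZero.pos m]) _
  have hmult : (0 : ℝ) < mult X ((n : ℝ) • ∑ j, X j) :=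
    pos_of_mul_pos_right (hm.trans_le hpow) (by positivity)
  have := Real.log_le_log hm hpow
  rw [Real.log_mul (by positivity) hmult.ne', Real.log_pow, Real.log_pow] at this
  push_cast at this
  linarith

/-- As `‖∑ X j‖ ^ 2` is an integer, some `k θ₀` lies within `1/2` of `n ∑ X j`, so
`multC X (k θ₀) = mult X (n ∑ X j)`, while `k ≈ n ‖∑ X j‖`. -/
lemma inner_mul_log_le_of_tendsto [NeZero m] (hX : IntegralVecs X) (hη : ∀ j, ⟪η, X j⟫ = 1)
    {L : ℝ} (hL : Tendsto (fun k : ℕ =>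
      Real.log (multC X ((k : ℝ) • (‖∑ j, X j‖⁻¹ • ∑ j, X j))) / k) atTop (𝓝 L)) :
    ⟪η, ‖∑ j, X j‖⁻¹ • ∑ j, X j⟫ * Real.log m ≤ L := by
  set S := ∑ j, X j
  have hS : ⟪η, S⟫ = m := by rw [inner_sum_of_coplanar hη, Fintype.card_fin]
  have hSpos : 0 < ‖S‖ := norm_pos_iff.2 (sum_ne_zero_of_coplanar hη)
  obtain ⟨A, hA⟩ := exists_int_eq_norm_sq (hX.int_coords_of_mem_sgOf (z := S) ⟨1, by simp [S]⟩)
  choose σ hσ using fun n : ℕ => exists_nat_abs_sub_lt_half (t := ‖S‖ * n) (by positivity)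
    (A := n ^ 2 * A) (by push_cast; rw [← hA]; ring)
  have hmultC : ∀ n : ℕ, multC X ((σ n : ℝ) • ‖S‖⁻¹ • S) = mult X ((n : ℝ) • S) := by
    intro n
    refine hX.multC_eq_mult_of_dist_lt ⟨fun _ => n, by simp [S, smul_sum]⟩ ?_
    have h := hσ n
    rw [← show ((σ n : ℝ) * ‖S‖⁻¹ - n) * ‖S‖ = σ n - ‖S‖ * n by field_simp, abs_mul,
      abs_of_pos hSpos] at h
    rwa [dist_eq_norm, smul_smul, ← sub_smul, norm_smul, Real.norm_eq_abs]
  have hlower : ∀ᶠ n : ℕ in atTop, m * Real.log m - m * m * (Real.log (n + 1) / n) ≤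
      Real.log (multC X ((σ n : ℝ) • ‖S‖⁻¹ • S)) / n := by
    filter_upwards [eventually_gt_atTop 0] with n hn
    have hn : (0 : ℝ) < n := by exact_mod_cast hn
    rw [hmultC, le_div_iff₀ hn]
    calc _ = n * m * Real.log m - m * m * Real.log (n + 1) := by field_simp
      _ ≤ _ := le_log_mult_smul_sum hη n
  have hbound := le_of_tendsto_of_tendsto
    (by simpa using tendsto_const_nhds.sub (tendsto_log_add_one_div_nat.const_mul (m * m : ℝ)))
    (tendsto_comp_div_of_abs_sub_le hSpos hL fun n => (hσ n).le) hlower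
  rw [real_inner_smul_right, hS, mul_assoc, inv_mul_le_iff₀ hSpos]
  exact hbound

end LowerBound

theorem stmt14_general {s m : ℕ} (hm : 2 ≤ m) (X : Fin m → Euc s)
    (hint : IntegralVecs X)
    (η : Euc s) (hη : ∀ j, ⟪η, X j⟫ = 1)
    (γ : Euc s → ℝ)
    (hγ : ∀ θ ∈ coneOf X, ‖θ‖ = 1 →
      Filter.Tendsto (fun k : ℕ => Real.log (multC X ((k : ℝ) • θ)) / k)
        Filter.atTop (nhds (γ θ))) :
    let θ₀ : Euc s := ‖∑ j, X j‖⁻¹ • ∑ j, X j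
    θ₀ ∈ coneOf X ∧ ‖θ₀‖ = 1 ∧ γ θ₀ / ⟪η, θ₀⟫ = Real.log m ∧
    ∀ θ ∈ coneOf X, ‖θ‖ = 1 → γ θ / ⟪η, θ⟫ ≤ Real.log m := by
  intro θ₀
  have : NeZero m := ⟨by omega⟩
  have hθ₀ : θ₀ ∈ coneOf X := ⟨fun _ => ‖∑ j, X j‖⁻¹, fun _ => by positivity, (smul_sum ..).symm⟩
  have hθ₀_norm : ‖θ₀‖ = 1 := norm_smul_inv_norm (sum_ne_zero_of_coplanar hη)
  have hpos : ∀ θ ∈ coneOf X, ‖θ‖ = 1 → 0 < ⟪η, θ⟫ := fun θ hθ hθ_norm =>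
    inner_pos_of_mem_coneOf hη hθ (norm_ne_zero_iff.1 (hθ_norm ▸ one_ne_zero))
  have hupper : ∀ θ ∈ coneOf X, ‖θ‖ = 1 → γ θ / ⟪η, θ⟫ ≤ Real.log m := fun θ hθ hθ_norm => by
    rw [div_le_iff₀' (hpos θ hθ hθ_norm)]
    exact le_inner_mul_log_of_tendsto hint hη hθ (hγ θ hθ hθ_norm)
  refine ⟨hθ₀, hθ₀_norm, le_antisymm (hupper θ₀ hθ₀ hθ₀_norm) ?_, hupper⟩
  rw [le_div_iff₀' (hpos θ₀ hθ₀ hθ₀_norm)]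
  exact inner_mul_log_le_of_tendsto hint hη (hγ θ₀ hθ₀ hθ₀_norm)

/-- If `X₁,…,X_m` are `η`-coplanar, then `max_θ γ(θ)/⟨η,θ⟩ = log m`, attained at
`θ₀ = (∑ X_j)/‖∑ X_j‖`. -/
theorem stmt14 {s m : ℕ} (hs : 1 ≤ s) (hm : 2 ≤ m) (X : Fin m → Euc s)
    (hint : IntegralVecs X)
    (hspan : Submodule.span ℝ (Set.range X) = ⊤)
    (α : Euc s) (hα : ∀ j, 0 < ⟪X j, α⟫)
    (η : Euc s) (hη : ∀ j, ⟪η, X j⟫ = 1)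
    (γ : Euc s → ℝ)
    (hγ : ∀ θ ∈ coneOf X, ‖θ‖ = 1 →
      Filter.Tendsto (fun k : ℕ => Real.log (multC X ((k : ℝ) • θ)) / k)
        Filter.atTop (nhds (γ θ))) :
    let θ₀ : Euc s := ‖∑ j, X j‖⁻¹ • ∑ j, X j
    θ₀ ∈ coneOf X ∧ ‖θ₀‖ = 1 ∧ γ θ₀ / ⟪η, θ₀⟫ = Real.log m ∧
    ∀ θ ∈ coneOf X, ‖θ‖ = 1 → γ θ / ⟪η, θ⟫ ≤ Real.log m :=
  stmt14_general hm X hint η hη γ hγ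
end
end
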